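/- arXiv:2409.08332 — 12 statements merged into one kernel-verified Lean document; each statement's English description precedes it below -/
import Mathlib

section
/- Let L be an n×n complex matrix and P a projection with Q := 1 − P. Then for every real t ≥ 0, ∫_{0}^{t} exp(τ • (Q*L*Q)) * Q * L * P * exp(−τ • L) dτ = Q − exp(t • (Q*L*Q)) * Q * exp(−t • L). -/
/-!
Write `Q = 1 - P` and `A = Q L Q`. The map `τ ↦ exp (τ A) Q exp (-τ L)` has derivative
`exp (τ A) (A Q - Q L) exp (-τ L)`, and `Q L - A Q = Q L (1 - Q) = Q L P` because `Q` is idempotent,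
so the integral is computed by the fundamental theorem of calculus.
-/

open NormedSpace

attribute [local instance] Matrix.frobeniusNormedAddCommGroup Matrix.frobeniusNormedSpace
  Matrix.frobeniusNormedRing

attribute [local instance] Matrix.frobeniusNormedAlgebra

section ExpSandwich

variable {𝔸 : Type*} [NormedRing 𝔸] [NormedAlgebra ℝ 𝔸] [CompleteSpace 𝔸]

theorem hasDerivAt_exp_smul_mul_mul_exp_neg_smul (A B L : 𝔸) (τ : ℝ) :
    HasDerivAt (fun s : ℝ => exp (s • A) * B * exp ((-s) • L))
      (exp (τ • A) * (A * B - B * L) * exp ((-τ) • L)) τ := by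
  have hexpA := hasDerivAt_exp_smul_const A τ
  have hexpL : HasDerivAt (fun s : ℝ => exp ((-s) • L)) (-(L * exp ((-τ) • L))) τ := by
    simpa only [neg_smul, smul_neg, neg_mul] using hasDerivAt_exp_smul_const' (-L) τ
  refine ((hexpA.mul_const B).mul hexpL).congr_deriv ?_
  noncomm_ring

theorem continuous_exp_smul_mul_mul_exp_neg_smul (A B L : 𝔸) :
    Continuous fun s : ℝ => exp (s • A) * B * exp ((-s) • L) :=
  continuous_iff_continuousAt.2 fun τ =>
    (hasDerivAt_exp_smul_mul_mul_exp_neg_smul A B L τ).continuousAt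

theorem integral_exp_smul_mul_mul_exp_neg_smul (A B L : 𝔸) (t : ℝ) :
    ∫ τ in (0 : ℝ)..t, exp (τ • A) * (B * L - A * B) * exp ((-τ) • L)
      = B - exp (t • A) * B * exp ((-t) • L) := by
  have hFTC := intervalIntegral.integral_eq_sub_of_hasDerivAt
    (fun τ _ => hasDerivAt_exp_smul_mul_mul_exp_neg_smul A B L τ)
    ((continuous_exp_smul_mul_mul_exp_neg_smul A (A * B - B * L) L).intervalIntegrable 0 t)
  calc ∫ τ in (0 : ℝ)..t, exp (τ • A) * (B * L - A * B) * exp ((-τ) • L)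
      = -∫ τ in (0 : ℝ)..t, exp (τ • A) * (A * B - B * L) * exp ((-τ) • L) := by
        rw [← intervalIntegral.integral_neg]
        congr 1 with τ
        noncomm_ring
    _ = B - exp (t • A) * B * exp ((-t) • L) := by
        rw [hFTC]
        simp

end ExpSandwich

theorem stmt_1_general {n : Type*} [Fintype n] [DecidableEq n]
    (L P : Matrix n n ℂ) (hP : P * P = P) (t : ℝ) :
    ∫ τ in (0:ℝ)..t,
        exp (τ • ((1 - P) * L * (1 - P))) * (1 - P) * L * P * exp ((-τ) • L)
      = (1 - P) - exp (t • ((1 - P) * L * (1 - P))) * (1 - P) * exp ((-t) • L) := by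
  set Q : Matrix n n ℂ := 1 - P with hQ
  have hQQ : Q * Q = Q := (IsIdempotentElem.one_sub hP).eq
  have hQLP : Q * L * P = Q * L - Q * L * Q * Q := by
    rw [mul_assoc _ Q Q, hQQ, hQ]
    noncomm_ring
  calc ∫ τ in (0:ℝ)..t, exp (τ • (Q * L * Q)) * Q * L * P * exp ((-τ) • L)
      = ∫ τ in (0:ℝ)..t, exp (τ • (Q * L * Q)) * (Q * L - Q * L * Q * Q) * exp ((-τ) • L) := by
        congr 1 with τ
        rw [← hQLP]
        noncomm_ring
    _ = Q - exp (t • (Q * L * Q)) * Q * exp ((-t) • L) :=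
        integral_exp_smul_mul_mul_exp_neg_smul _ _ _ t

/-- Closed form of the integral `Σ(t)` appearing in the TCL master equation:
`∫₀ᵗ exp(τ • QLQ) * Q * L * P * exp(-τ • L) dτ = Q - exp(t • QLQ) * Q * exp(-t • L)`. -/
theorem stmt_1 {n : Type*} [Fintype n] [DecidableEq n]
    (L P : Matrix n n ℂ) (hP : P * P = P) (t : ℝ) (ht : 0 ≤ t) :
    ∫ τ in (0:ℝ)..t,
        exp (τ • ((1 - P) * L * (1 - P))) * (1 - P) * L * P * exp ((-τ) • L)
      = (1 - P) - exp (t • ((1 - P) * L * (1 - P))) * (1 - P) * exp ((-t) • L) :=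
  stmt_1_general L P hP t
end

section
/- Let P be a projection with Q := 1 − P, and let E be any n×n complex matrix. If Π := Q + P * E * P is invertible, then Q + P * E is invertible and (Q + P * E)⁻¹ = P * Π⁻¹ * P + Q − P * Π⁻¹ * P * E * Q. -/
/-!
With `Q = 1 - P` and `Π = Q + P E P`, one has the factorization `Q + P E = (1 + P E Q) Π`, and
`(P E Q)² = 0` because `Q P = 0`. Hence `Q + P E` is invertible with inverse `Π⁻¹ (1 - P E Q)`.
Since `Π` commutes with `P` and fixes `Q`, so does `Π⁻¹`, i.e. `Π⁻¹ = P Π⁻¹ P + Q`, which turns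
`Π⁻¹ (1 - P E Q)` into the stated formula.
-/

open scoped Ring

theorem Commute.ring_inverse_right {M₀ : Type*} [MonoidWithZero M₀] {a b : M₀}
    (h : Commute a b) : Commute a b⁻¹ʳ := by
  by_cases hb : IsUnit b
  · obtain ⟨u, rfl⟩ := hb
    rw [Ring.inverse_unit]
    exact h.units_inv_right
  · rw [Ring.inverse_non_unit _ hb]
    exact Commute.zero_right a

namespace IsIdempotentElem

variable {R : Type*} [Ring R] {p : R}

theorem mul_one_sub_add_mul_mul (hp : IsIdempotentElem p) (e : R) :
    p * (1 - p + p * e * p) = p * e * p := by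
  rw [mul_add, hp.mul_one_sub_self, zero_add, ← mul_assoc, ← mul_assoc, hp.eq]

theorem one_sub_add_mul_mul_mul (hp : IsIdempotentElem p) (e : R) :
    (1 - p + p * e * p) * p = p * e * p := by
  rw [add_mul, hp.one_sub_mul_self, zero_add, mul_assoc, hp.eq]

theorem commute_one_sub_add_mul_mul (hp : IsIdempotentElem p) (e : R) :
    Commute p (1 - p + p * e * p) :=
  (hp.mul_one_sub_add_mul_mul e).trans (hp.one_sub_add_mul_mul_mul e).symm

theorem one_sub_add_mul_mul_mul_one_sub (hp : IsIdempotentElem p) (e : R) :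
    (1 - p + p * e * p) * (1 - p) = 1 - p := by
  rw [add_mul, hp.one_sub.eq, mul_assoc, hp.mul_one_sub_self, mul_zero, add_zero]

theorem one_sub_mul_one_sub_add_mul_mul (hp : IsIdempotentElem p) (e : R) :
    (1 - p) * (1 - p + p * e * p) = 1 - p := by
  rw [mul_add, hp.one_sub.eq, ← mul_assoc, ← mul_assoc, hp.one_sub_mul_self, zero_mul, zero_mul,
    add_zero]

theorem one_sub_add_mul_eq_mul (hp : IsIdempotentElem p) (e : R) :
    1 - p + p * e = (1 + p * e * (1 - p)) * (1 - p + p * e * p) := by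
  rw [add_mul, one_mul, mul_assoc (p * e), hp.one_sub_mul_one_sub_add_mul_mul]
  noncomm_ring

theorem mul_mul_one_sub_mul_self_eq_zero (hp : IsIdempotentElem p) (e : R) :
    p * e * (1 - p) * (p * e * (1 - p)) = 0 := by
  simp only [mul_assoc, ← mul_assoc (1 - p), hp.one_sub_mul_self, zero_mul, mul_zero]

theorem isUnit_one_sub_add_mul (hp : IsIdempotentElem p) (e : R)
    (h : IsUnit (1 - p + p * e * p)) : IsUnit (1 - p + p * e) := by
  have hx : IsUnit (1 + p * e * (1 - p)) :=
    IsNilpotent.isUnit_one_add ⟨2, by rw [sq, hp.mul_mul_one_sub_mul_self_eq_zero]⟩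
  rw [hp.one_sub_add_mul_eq_mul]
  exact hx.mul h

theorem inverse_one_sub_add_mul_mul_mul (hp : IsIdempotentElem p) (e : R) :
    (1 - p + p * e * p)⁻¹ʳ * p = p * (1 - p + p * e * p)⁻¹ʳ * p := by
  rw [(hp.commute_one_sub_add_mul_mul e).ring_inverse_right.eq, mul_assoc _ p p, hp.eq]

theorem inverse_one_sub_add_mul_mul_eq (hp : IsIdempotentElem p) (e : R)
    (h : IsUnit (1 - p + p * e * p)) :
    (1 - p + p * e * p)⁻¹ʳ = p * (1 - p + p * e * p)⁻¹ʳ * p + (1 - p) := by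
  have hJp := hp.inverse_one_sub_add_mul_mul_mul e
  have hJq := hp.one_sub_add_mul_mul_mul_one_sub e
  set J := (1 - p + p * e * p)⁻¹ʳ
  calc J = J * p + J * ((1 - p + p * e * p) * (1 - p)) := by
        rw [hJq, ← mul_add, add_sub_cancel, mul_one]
    _ = p * J * p + (1 - p) := by rw [hJp, Ring.inverse_mul_cancel_left _ _ h]

theorem inverse_one_sub_add_mul (hp : IsIdempotentElem p) (e : R)
    (h : IsUnit (1 - p + p * e * p)) :
    (1 - p + p * e)⁻¹ʳ = p * (1 - p + p * e * p)⁻¹ʳ * p + (1 - p)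
      - p * (1 - p + p * e * p)⁻¹ʳ * p * e * (1 - p) := by
  have hJp := hp.inverse_one_sub_add_mul_mul_mul e
  have hJ := hp.inverse_one_sub_add_mul_mul_eq e h
  set J := (1 - p + p * e * p)⁻¹ʳ
  set x := p * e * (1 - p)
  have hinv : (1 - p + p * e) * (J * (1 - x)) = 1 := by
    rw [hp.one_sub_add_mul_eq_mul, mul_assoc, Ring.mul_inverse_cancel_left _ _ h]
    have hxx : x * x = 0 := hp.mul_mul_one_sub_mul_self_eq_zero e
    show (1 + x) * (1 - x) = 1
    rw [add_mul, one_mul, mul_sub, mul_one, hxx]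
    abel
  calc (1 - p + p * e)⁻¹ʳ = (1 - p + p * e)⁻¹ʳ * ((1 - p + p * e) * (J * (1 - x))) := by
        rw [hinv, mul_one]
    _ = J * (1 - x) := Ring.inverse_mul_cancel_left _ _ (hp.isUnit_one_sub_add_mul e h)
    _ = p * J * p + (1 - p) - p * J * p * e * (1 - p) := by
      rw [mul_sub, mul_one]
      simp only [x, ← mul_assoc, hJp]
      rw [← hJ]

end IsIdempotentElem

/-- If `P` is a projection, `Q = 1 - P`, and `Π = Q + P * E * P` is invertible, then
`Q + P * E` is invertible with inverse `P * Π⁻¹ * P + Q - P * Π⁻¹ * P * E * Q`. -/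
theorem stmt_3 {n : Type*} [Fintype n] [DecidableEq n]
    (P E : Matrix n n ℂ) (hP : P * P = P)
    (hPi : IsUnit ((1 - P) + P * E * P)) :
    IsUnit ((1 - P) + P * E) ∧
    ((1 - P) + P * E)⁻¹ =
      P * ((1 - P) + P * E * P)⁻¹ * P + (1 - P)
        - P * ((1 - P) + P * E * P)⁻¹ * P * E * (1 - P) := by
  simp only [Matrix.nonsing_inv_eq_ringInverse]
  exact ⟨IsIdempotentElem.isUnit_one_sub_add_mul hP E hPi,
    IsIdempotentElem.inverse_one_sub_add_mul hP E hPi⟩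
end

section
/- Let L be an n×n complex matrix, P a projection with Q := 1 − P, and t ≥ 0 a real number. Define Σ(t) := Q − exp(t • (Q*L*Q)) * Q * exp(−t • L) and Π(t) := Q + P * exp(t • L) * P. If Π(t) is invertible, then 1 − Σ(t) is invertible and (1 − Σ(t))⁻¹ * exp(t • (Q*L*Q)) * Q = (1 − exp(t • L) * P * (Π(t))⁻¹ * P) * exp(t • L) * Q. -/
open NormedSpace

attribute [local instance] Matrix.frobeniusNormedAddCommGroup Matrix.frobeniusNormedSpace
  Matrix.frobeniusNormedRing Matrix.frobeniusNormedAlgebra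

/-!
Write `Q = 1 - P`, `E = exp(tL)` and `F = exp(t • QLQ)`. Since `QLQ * P = 0`, `F * P = P`, and then
`1 - Σ(t) = P + F Q E⁻¹ = F (1 + P E Q) Π(t) E⁻¹`, a product of units (`(P E Q)² = 0`).
The formula follows from `(P + F Q E⁻¹) (1 - E P Π(t)⁻¹ P) E Q = F Q`, which only uses
`P E P Π(t)⁻¹ = P Π(t) Π(t)⁻¹ = P`.
-/

theorem exp_mul_of_mul_eq_zero {𝔸 : Type*} [NormedRing 𝔸] [NormedAlgebra ℚ 𝔸] [CompleteSpace 𝔸]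
    {x p : 𝔸} (h : x * p = 0) : exp x * p = p := by
  have hp : SemiconjBy p 0 x := by rw [SemiconjBy, mul_zero, h]
  simpa using hp.exp_right.symm

namespace IsIdempotentElem

variable {R : Type*} [Ring R] {p : R}

theorem isUnit_one_add_mul_mul_one_sub (hp : IsIdempotentElem p) (e : R) :
    IsUnit (1 + p * e * (1 - p)) := by
  refine IsNilpotent.isUnit_one_add ⟨2, ?_⟩
  calc (p * e * (1 - p)) ^ 2 = p * e * ((1 - p) * p) * e * (1 - p) := by noncomm_ring
    _ = 0 := by rw [hp.one_sub_mul_self]; noncomm_ring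

theorem add_mul_one_sub_mul_eq (hp : IsIdempotentElem p) {e e' f : R} (he : e * e' = 1)
    (hf : f * p = p) :
    p + f * (1 - p) * e' = f * (1 + p * e * (1 - p)) * ((1 - p) + p * e * p) * e' := by
  have hq : IsIdempotentElem (1 - p) := hp.one_sub
  symm
  calc f * (1 + p * e * (1 - p)) * ((1 - p) + p * e * p) * e'
      = f * ((1 - p) + p * e * p + p * e * ((1 - p) * (1 - p)) + p * e * ((1 - p) * p) * e * p)
          * e' := by noncomm_ring
    _ = f * (1 - p) * e' + f * p * (e * e') := by
      rw [hq.eq, hp.one_sub_mul_self]; noncomm_ring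
    _ = p + f * (1 - p) * e' := by rw [hf, he, mul_one, add_comm]

theorem add_mul_one_sub_mul_mul_eq (hp : IsIdempotentElem p) {e e' π' : R} (f : R)
    (he : e' * e = 1) (hπ : ((1 - p) + p * e * p) * π' = 1) :
    (p + f * (1 - p) * e') * ((1 - e * p * π' * p) * e * (1 - p)) = f * (1 - p) := by
  have hq : IsIdempotentElem (1 - p) := hp.one_sub
  have hpπ : p * e * p * π' = p := by
    calc p * e * p * π' = p * ((1 - p) + p * e * p) * π' := by
          rw [mul_add, hp.mul_one_sub_self, zero_add, ← mul_assoc, ← mul_assoc, hp.eq]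
      _ = p := by rw [mul_assoc, hπ, mul_one]
  calc (p + f * (1 - p) * e') * ((1 - e * p * π' * p) * e * (1 - p))
      = p * e * (1 - p) - p * e * p * π' * p * e * (1 - p)
          + f * ((1 - p) * (e' * e) * (1 - p) - (1 - p) * (e' * e) * p * π' * p * e * (1 - p)) := by
        noncomm_ring
    _ = f * (1 - p) := by
      rw [hpπ, he, mul_one, hq.eq, hp.one_sub_mul_self, hp.eq]; noncomm_ring

end IsIdempotentElem

theorem stmt_5_general {n : Type*} [Fintype n] [DecidableEq n]
    (L P : Matrix n n ℂ) (hP : P * P = P) (t : ℝ)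
    (hPi : IsUnit ((1 - P) + P * NormedSpace.exp (t • L) * P)) :
    IsUnit (1 - ((1 - P) - NormedSpace.exp (t • ((1 - P) * L * (1 - P))) * (1 - P) * NormedSpace.exp ((-t) • L))) ∧
    (1 - ((1 - P) - NormedSpace.exp (t • ((1 - P) * L * (1 - P))) * (1 - P) * NormedSpace.exp ((-t) • L)))⁻¹
        * NormedSpace.exp (t • ((1 - P) * L * (1 - P))) * (1 - P)
      = (1 - NormedSpace.exp (t • L) * P * ((1 - P) + P * NormedSpace.exp (t • L) * P)⁻¹ * P)
        * NormedSpace.exp (t • L) * (1 - P) := by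
  have hP : IsIdempotentElem P := hP
  have hEE' : exp (t • L) * exp ((-t) • L) = 1 := by
    rw [neg_smul, ← Matrix.exp_add_of_commute _ _ (Commute.refl (t • L)).neg_right,
      add_neg_cancel, exp_zero]
  have hE'E : exp ((-t) • L) * exp (t • L) = 1 := by
    rw [neg_smul, ← Matrix.exp_add_of_commute _ _ (Commute.refl (t • L)).neg_left,
      neg_add_cancel, exp_zero]
  have hFP : exp (t • ((1 - P) * L * (1 - P))) * P = P := exp_mul_of_mul_eq_zero <| by
    rw [smul_mul_assoc, mul_assoc, hP.one_sub_mul_self, mul_zero, smul_zero]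
  have hPi_mul_inv := Matrix.mul_nonsing_inv _ ((Matrix.isUnit_iff_isUnit_det _).mp hPi)
  have hone_sub_sub : ∀ X : Matrix n n ℂ, 1 - ((1 - P) - X) = P + X := fun X => by abel
  rw [hone_sub_sub]
  have hunit : IsUnit (P + exp (t • ((1 - P) * L * (1 - P))) * (1 - P) * exp ((-t) • L)) := by
    rw [hP.add_mul_one_sub_mul_eq hEE' hFP]
    exact (((Matrix.isUnit_exp _).mul (hP.isUnit_one_add_mul_mul_one_sub _)).mul hPi).mul
      (Matrix.isUnit_exp _)
  refine ⟨hunit, ?_⟩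
  calc _ = _ * (_ * _) := by rw [hP.add_mul_one_sub_mul_mul_eq _ hE'E hPi_mul_inv, mul_assoc]
    _ = _ := Matrix.nonsing_inv_mul_cancel_left _ _ ((Matrix.isUnit_iff_isUnit_det _).mp hunit)

/-- With `Σ(t) = Q - exp(t • QLQ) * Q * exp(-t • L)` and `Π(t) = Q + P * exp(t • L) * P`,
if `Π(t)` is invertible then so is `1 - Σ(t)`, and
`(1 - Σ(t))⁻¹ * exp(t • QLQ) * Q = (1 - exp(t • L) * P * Π(t)⁻¹ * P) * exp(t • L) * Q`. -/
theorem stmt_5 {n : Type*} [Fintype n] [DecidableEq n]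
    (L P : Matrix n n ℂ) (hP : P * P = P) (t : ℝ) (ht : 0 ≤ t)
    (hPi : IsUnit ((1 - P) + P * NormedSpace.exp (t • L) * P)) :
    IsUnit (1 - ((1 - P) - NormedSpace.exp (t • ((1 - P) * L * (1 - P))) * (1 - P) * NormedSpace.exp ((-t) • L))) ∧
    (1 - ((1 - P) - NormedSpace.exp (t • ((1 - P) * L * (1 - P))) * (1 - P) * NormedSpace.exp ((-t) • L)))⁻¹
        * NormedSpace.exp (t • ((1 - P) * L * (1 - P))) * (1 - P)
      = (1 - NormedSpace.exp (t • L) * P * ((1 - P) + P * NormedSpace.exp (t • L) * P)⁻¹ * P)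
        * NormedSpace.exp (t • L) * (1 - P) :=
  stmt_5_general L P hP t hPi
end

section
/- Let L be an n×n complex matrix, P a projection with Q := 1 − P, and t ≥ 0 a real number. Define Σ(t) := Q − exp(t • (Q*L*Q)) * Q * exp(−t • L). If 1 − Σ(t) is invertible, then exp(t • L) = (1 − Σ(t))⁻¹ * exp(t • (Q*L*Q)) * Q + (1 − Σ(t))⁻¹ * P * exp(t • L). (This is the exact time-convolutionless decomposition ρ(t) = J(t) Q ρ(0) + P(t) ρ(t) applied to ρ(t) = exp(tL) ρ(0).) -/
open NormedSpace

attribute [local instance] Matrix.frobeniusNormedAddCommGroup Matrix.frobeniusNormedSpace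
  Matrix.frobeniusNormedRing

/-! Since `exp (-t • L) * exp (t • L) = 1`, multiplying `1 - Σ(t)` on the right by `exp (t • L)`
gives `exp (t • QLQ) * Q + P * exp (t • L)`; multiplying on the left by `(1 - Σ(t))⁻¹` yields
the identity. Everything beyond `exp (-A) * exp A = 1` is ring algebra. -/

theorem one_sub_sub_mul_mul_of_mul_eq_one {R : Type*} [Ring R] {p x e e' : R} (h : e' * e = 1) :
    (1 - ((1 - p) - x * (1 - p) * e')) * e = x * (1 - p) + p * e := by
  have expand : (1 - ((1 - p) - x * (1 - p) * e')) * e = p * e + x * (1 - p) * (e' * e) := by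
    noncomm_ring
  rw [expand, h, mul_one, add_comm]

theorem Matrix.exp_neg_smul_mul_exp_smul {n : Type*} [Fintype n] [DecidableEq n]
    (L : Matrix n n ℂ) (t : ℝ) : exp ((-t) • L) * exp (t • L) = 1 := by
  rw [← Matrix.exp_add_of_commute _ _ ((Commute.refl L).smul_left _ |>.smul_right _), ← add_smul,
    neg_add_cancel, zero_smul, NormedSpace.exp_zero]

theorem stmt_8_general {n : Type*} [Fintype n] [DecidableEq n]
    (L P : Matrix n n ℂ) (t : ℝ)
    (hS : IsUnit
      (1 - ((1 - P) - exp (t • ((1 - P) * L * (1 - P))) * (1 - P) * exp ((-t) • L)))) :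
    exp (t • L)
      = (1 - ((1 - P) - exp (t • ((1 - P) * L * (1 - P))) * (1 - P) * exp ((-t) • L)))⁻¹
          * exp (t • ((1 - P) * L * (1 - P))) * (1 - P)
        + (1 - ((1 - P) - exp (t • ((1 - P) * L * (1 - P))) * (1 - P) * exp ((-t) • L)))⁻¹
          * P * exp (t • L) := by
  set A := 1 - ((1 - P) - exp (t • ((1 - P) * L * (1 - P))) * (1 - P) * exp ((-t) • L))
  have hA : A⁻¹ * A = 1 := Matrix.nonsing_inv_mul _ ((Matrix.isUnit_iff_isUnit_det _).mp hS)
  calc exp (t • L) = A⁻¹ * (A * exp (t • L)) := by rw [← mul_assoc, hA, one_mul]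
    _ = _ := by
      rw [one_sub_sub_mul_mul_of_mul_eq_one (Matrix.exp_neg_smul_mul_exp_smul L t), mul_add,
        ← mul_assoc, ← mul_assoc]

/-- Exact time-convolutionless decomposition: with
`Σ(t) = Q - exp(t • QLQ) * Q * exp(-t • L)`, if `1 - Σ(t)` is invertible then
`exp(t • L) = (1 - Σ(t))⁻¹ * exp(t • QLQ) * Q + (1 - Σ(t))⁻¹ * P * exp(t • L)`. -/
theorem stmt_8 {n : Type*} [Fintype n] [DecidableEq n]
    (L P : Matrix n n ℂ) (hP : P * P = P) (t : ℝ) (ht : 0 ≤ t)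
    (hS : IsUnit
      (1 - ((1 - P) - exp (t • ((1 - P) * L * (1 - P))) * (1 - P) * exp ((-t) • L)))) :
    exp (t • L)
      = (1 - ((1 - P) - exp (t • ((1 - P) * L * (1 - P))) * (1 - P) * exp ((-t) • L)))⁻¹
          * exp (t • ((1 - P) * L * (1 - P))) * (1 - P)
        + (1 - ((1 - P) - exp (t • ((1 - P) * L * (1 - P))) * (1 - P) * exp ((-t) • L)))⁻¹
          * P * exp (t • L) :=
  stmt_8_general L P t hS
end

section
/- Let L be an n×n complex matrix and P a projection with Q := 1 − P. If Q * L * P = 0, then for every real t ≥ 0, Q * exp(t • L) = exp(t • (Q*L*Q)) * Q. -/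
open NormedSpace

attribute [local instance] Matrix.frobeniusNormedAddCommGroup Matrix.frobeniusNormedSpace
  Matrix.frobeniusNormedRing

attribute [local instance] Matrix.frobeniusNormedAlgebra

theorem semiconjBy_one_sub_of_one_sub_mul_mul_eq_zero {R : Type*} [Ring R] {P L : R}
    (hP : P * P = P) (hL : (1 - P) * L * P = 0) :
    SemiconjBy (1 - P) L ((1 - P) * L * (1 - P)) := by
  have hQ : (1 - P) * (1 - P) = 1 - P := IsIdempotentElem.one_sub hP
  rw [SemiconjBy, mul_assoc _ (1 - P), hQ, mul_sub ((1 - P) * L), hL, mul_one, sub_zero]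

theorem stmt_9_general {n : Type*} [Fintype n] [DecidableEq n]
    (L P : Matrix n n ℂ) (hP : P * P = P)
    (hQLP : (1 - P) * L * P = 0) (t : ℝ) :
    (1 - P) * exp (t • L) = exp (t • ((1 - P) * L * (1 - P))) * (1 - P) :=
  ((semiconjBy_one_sub_of_one_sub_mul_mul_eq_zero hP hQLP).smul_right t).exp_right

/-- If `Q * L * P = 0` (the range of `P` is `L`-invariant in the complementary sense),
then `Q * exp(t • L) = exp(t • QLQ) * Q` for all `t ≥ 0`. -/
theorem stmt_9 {n : Type*} [Fintype n] [DecidableEq n]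
    (L P : Matrix n n ℂ) (hP : P * P = P)
    (hQLP : (1 - P) * L * P = 0) (t : ℝ) (ht : 0 ≤ t) :
    (1 - P) * exp (t • L) = exp (t • ((1 - P) * L * (1 - P))) * (1 - P) :=
  stmt_9_general L P hP hQLP t
end

section
/- Let L be an n×n complex matrix, S a finite type, and for each s ∈ S let r s, l s : n → ℂ and λ s ∈ ℂ be such that L *ᵥ (r s) = λ s • (r s). Suppose the S×S matrix N defined by N s s' = star (l s) ⬝ᵥ (r s') is invertible, and define P := ∑_{s,s' ∈ S} (N⁻¹ s s') • vecMulVec (r s) (star (l s')). Then: (a) P * P = P; (b) P *ᵥ (r s) = r s for every s ∈ S; and (c) (1 − P) * L * P = 0, i.e. the range of the projection P is an L-invariant subspace. -/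
open Matrix

/-- The overlap matrix `N s s' = ⟪l s, r s'⟫`. -/
noncomputable def overlapMat {n S : Type*} [Fintype n]
    (r l : S → n → ℂ) : Matrix S S ℂ :=
  Matrix.of fun s s' => star (l s) ⬝ᵥ r s'

/-- The (oblique) spectral projector `P = ∑ s s', (N⁻¹)_{s s'} • r s (l s')ᴴ`. -/
noncomputable def obliqueProj {n S : Type*} [Fintype n] [Fintype S] [DecidableEq S]
    (r l : S → n → ℂ) : Matrix n n ℂ :=
  ∑ s : S, ∑ s' : S, ((overlapMat r l)⁻¹ s s') • vecMulVec (r s) (star (l s'))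

/-!
Collect the vectors into matrices: `R` with columns `r s` and `K` with rows `(l s)ᴴ`. Then
`N = K R` and `P = R N⁻¹ K`, so `P R = R N⁻¹ N = R`; hence `P` fixes every matrix of the form
`R X`. Both `P = R (N⁻¹ K)` and, since the eigenvalue equations say `L R = R D` with `D`
diagonal, `L P = R (D N⁻¹ K)` are of that form, which gives `P² = P` and `P L P = L P`.
-/

namespace Matrix

variable {m S α : Type*}

theorem mul_nonsing_inv_mul_mul_self [Fintype m] [Fintype S] [DecidableEq S] [CommRing α]
    (R : Matrix m S α) (K : Matrix S m α) (h : IsUnit (K * R)) :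
    R * (K * R)⁻¹ * K * R = R := by
  rw [Matrix.mul_assoc _ K, Matrix.mul_assoc, nonsing_inv_mul _ ((isUnit_iff_isUnit_det _).mp h),
    Matrix.mul_one]

theorem sum_sum_smul_vecMulVec {n : Type*} [Fintype S] [CommSemiring α] (A : Matrix S S α)
    (u : S → m → α) (v : S → n → α) :
    ∑ s, ∑ s', A s s' • vecMulVec (u s) (v s') = (of u)ᵀ * A * of v := by
  ext i j
  simp only [Matrix.sum_apply, smul_apply, vecMulVec_apply, mul_apply, transpose_apply, of_apply,
    smul_eq_mul, Finset.sum_mul]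
  rw [Finset.sum_comm]
  exact Finset.sum_congr rfl fun _ _ => Finset.sum_congr rfl fun _ _ => by ring

theorem mul_transpose_of_eq_mul_diagonal [Fintype m] [Fintype S] [DecidableEq S] [CommSemiring α]
    (L : Matrix m m α) (r : S → m → α) (lam : S → α)
    (heig : ∀ s, L *ᵥ r s = lam s • r s) :
    L * (of r)ᵀ = (of r)ᵀ * diagonal lam := by
  ext i s
  rw [mul_diagonal]
  simpa [mul_apply, mulVec, dotProduct, mul_comm] using congrFun (heig s) i

theorem mulVec_eq_of_mul_transpose_of [Fintype m] [Semiring α] {M : Matrix m m α}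
    {r : S → m → α} (h : M * (of r)ᵀ = (of r)ᵀ) (s : S) : M *ᵥ r s = r s := by
  ext i
  simpa [mul_apply, mulVec, dotProduct] using congrFun (congrFun h i) s

end Matrix

theorem overlapMat_eq_mul {n S : Type*} [Fintype n] (r l : S → n → ℂ) :
    overlapMat r l = of (star l) * (of r)ᵀ := by
  ext s s'
  simp [overlapMat, mul_apply, dotProduct]

theorem obliqueProj_eq_mul {n S : Type*} [Fintype n] [Fintype S] [DecidableEq S]
    (r l : S → n → ℂ) :
    obliqueProj r l = (of r)ᵀ * ((of (star l) * (of r)ᵀ)⁻¹ * of (star l)) := by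
  rw [obliqueProj, sum_sum_smul_vecMulVec, overlapMat_eq_mul, Matrix.mul_assoc]
  rfl

/-- If `r s` are eigenvectors of `L` and the overlap matrix `N` is invertible, then
`P = ∑ (N⁻¹)_{ss'} • r s (l s')ᴴ` is a projection, fixes each `r s`, and its range
is an `L`-invariant subspace: `(1 - P) * L * P = 0`. -/
theorem stmt_10 {n S : Type*} [Fintype n] [DecidableEq n] [Fintype S] [DecidableEq S]
    (L : Matrix n n ℂ) (r l : S → n → ℂ) (lam : S → ℂ)
    (heig : ∀ s, L *ᵥ r s = lam s • r s)
    (hN : IsUnit (overlapMat r l)) :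
    obliqueProj r l * obliqueProj r l = obliqueProj r l ∧
    (∀ s, obliqueProj r l *ᵥ r s = r s) ∧
    (1 - obliqueProj r l) * L * obliqueProj r l = 0 := by
  set R : Matrix n S ℂ := (of r)ᵀ
  set K : Matrix S n ℂ := of (star l)
  have hP : obliqueProj r l = R * ((K * R)⁻¹ * K) := obliqueProj_eq_mul r l
  rw [overlapMat_eq_mul] at hN
  have hPR : obliqueProj r l * R = R := by
    rw [hP, ← Matrix.mul_assoc]
    exact mul_nonsing_inv_mul_mul_self R K hN
  have hPfix (X : Matrix S n ℂ) : obliqueProj r l * (R * X) = R * X := by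
    rw [← Matrix.mul_assoc, hPR]
  have hLP : L * obliqueProj r l = R * (diagonal lam * ((K * R)⁻¹ * K)) := by
    rw [hP, ← Matrix.mul_assoc L, mul_transpose_of_eq_mul_diagonal L r lam heig, Matrix.mul_assoc]
  refine ⟨?_, mulVec_eq_of_mul_transpose_of hPR, ?_⟩
  · simpa only [← hP] using hPfix ((K * R)⁻¹ * K)
  · rw [Matrix.sub_mul, Matrix.sub_mul, Matrix.one_mul, Matrix.mul_assoc, hLP, hPfix, sub_self]
end

section
/- Under the adiabatic-elimination eigensystem hypotheses (stated in the context), the time-dependent projector converges exponentially fast: there exists a constant C ≥ 0 such that for all real t ≥ 0, ‖exp(t • L) * P * (Π(t))⁻¹ * P − P∞‖ ≤ C * exp(−δ * t), where P∞ := ∑_{s,s' ∈ S} (N⁻¹ s s') • vecMulVec (r s) (star (l⁰ s')) and ‖·‖ is the Frobenius norm on matrices. -/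
open Matrix NormedSpace

attribute [local instance] Matrix.frobeniusNormedAddCommGroup Matrix.frobeniusNormedSpace
  Matrix.frobeniusNormedRing

/-- The projection `P = ∑_{s ∈ S} r⁰_s (l⁰_s)ᴴ` onto the slow modes of the unperturbed
generator. -/
noncomputable def slowProj {n S F : Type*} [Fintype n] [Fintype S]
    (r0 l0 : S ⊕ F → n → ℂ) : Matrix n n ℂ :=
  ∑ s : S, vecMulVec (r0 (Sum.inl s)) (star (l0 (Sum.inl s)))

/-- The overlap matrix `N s s' = ⟪l⁰_s, r_{s'}⟫`. -/
noncomputable def overlapN {n S F : Type*} [Fintype n]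
    (l0 r : S ⊕ F → n → ℂ) : Matrix S S ℂ :=
  Matrix.of fun s s' => star (l0 (Sum.inl s)) ⬝ᵥ r (Sum.inl s')

/-- The overlap matrix `M s s' = ⟪l_s, r⁰_{s'}⟫`. -/
noncomputable def overlapM {n S F : Type*} [Fintype n]
    (l r0 : S ⊕ F → n → ℂ) : Matrix S S ℂ :=
  Matrix.of fun s s' => star (l (Sum.inl s)) ⬝ᵥ r0 (Sum.inl s')

/-- The asymptotic (spectral) projector `P∞ = ∑_{s,s'} (N⁻¹)_{s s'} • r_s (l⁰_{s'})ᴴ`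
onto the slow invariant subspace. -/
noncomputable def asympProj {n S F : Type*} [Fintype n] [Fintype S] [DecidableEq S]
    (r l0 : S ⊕ F → n → ℂ) : Matrix n n ℂ :=
  ∑ s : S, ∑ s' : S,
    ((overlapN l0 r)⁻¹ s s') • vecMulVec (r (Sum.inl s)) (star (l0 (Sum.inl s')))

/-- The effective spectral gap
`δ = min_{s,f} Re(λ_s - λ_f) - max_s (-Re λ_s)`. -/
noncomputable def gapDelta {S F : Type*} [Fintype S] [Fintype F] [Nonempty S] [Nonempty F]
    (lam : S ⊕ F → ℂ) : ℝ :=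
  (Finset.univ.inf' Finset.univ_nonempty
      fun p : S × F => (lam (Sum.inl p.1) - lam (Sum.inr p.2)).re)
    - (Finset.univ.sup' Finset.univ_nonempty fun s : S => -(lam (Sum.inl s)).re)

/-! Writing `P = V W` with `W V = 1`, invertibility of `Π(t)` makes the compression
`E(t) = W exp(tL) V` invertible and `exp(tL) P Π(t)⁻¹ P = exp(tL) V E(t)⁻¹ W`. In the eigenbasis
`E(t) = N D_S(t) M + B(t)`, where `D_S(t) = diag(e^{tλ_s})` and the fast part
`B(t) = O(e^{-(δ+2a)t})` with `a = max_s (-Re λ_s)`. As `(N D_S M)⁻¹ = O(e^{at})`, the product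
`B (N D_S M)⁻¹` tends to zero, so `E⁻¹ = O(e^{at})` as well; since `D_S M (N D_S M)⁻¹ = N⁻¹`, the
distance to `P∞ = R_S N⁻¹ W` is a sum of products whose exponents add up to at most `-δ`.
Continuity of the left-hand side on the compact interval before the asymptotic regime gives a
uniform constant. -/

open Asymptotics Filter Topology Ring

attribute [local instance] Matrix.frobeniusNormedAlgebra

section VectorFamilies

variable {α n ι κ : Type*} [CommSemiring α] [StarRing α]

theorem map_star_of_mul_transpose_of [Fintype n] (l : ι → n → α) (r : κ → n → α) :
    (of l).map star * (of r)ᵀ = of fun i j => star (l i) ⬝ᵥ r j := by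
  ext i j
  simp [mul_apply, dotProduct]

theorem map_star_of_mul_transpose_of_eq_one [Fintype n] [DecidableEq ι] {l r : ι → n → α}
    (h : ∀ i j, star (l i) ⬝ᵥ r j = if i = j then 1 else 0) : (of l).map star * (of r)ᵀ = 1 := by
  rw [map_star_of_mul_transpose_of]
  ext i j
  simp [h, one_apply]

variable [Fintype ι]

theorem transpose_of_mul_map_star_of (r l : ι → n → α) :
    (of r)ᵀ * (of l).map star = ∑ i, vecMulVec (r i) (star (l i)) := by
  ext x y
  simp [mul_apply, Matrix.sum_apply, vecMulVec_apply]

theorem transpose_of_mul_mul_map_star_of [Fintype κ] (r : ι → n → α) (A : Matrix ι κ α)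
    (l : κ → n → α) :
    (of r)ᵀ * A * (of l).map star = ∑ i, ∑ j, A i j • vecMulVec (r i) (star (l j)) := by
  ext x y
  simp only [mul_apply, Matrix.sum_apply, Matrix.smul_apply, vecMulVec_apply, Finset.sum_mul,
    transpose_apply, of_apply, map_apply, Pi.star_apply, smul_eq_mul]
  rw [Finset.sum_comm]
  refine Finset.sum_congr rfl fun i _ => Finset.sum_congr rfl fun j _ => ?_
  ring

end VectorFamilies

section ExpDiagonal

variable {ι : Type*} [Fintype ι] [DecidableEq ι]

noncomputable def expDiagonal (z : ι → ℂ) (t : ℝ) : Matrix ι ι ℂ :=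
  diagonal fun i => Complex.exp (t * z i)

theorem expDiagonal_mul_expDiagonal_neg (z : ι → ℂ) (t : ℝ) :
    expDiagonal z t * expDiagonal (-z) t = 1 := by
  rw [expDiagonal, expDiagonal, diagonal_mul_diagonal, ← diagonal_one]
  congr 1
  funext i
  rw [← Complex.exp_add, Pi.neg_apply, mul_neg, add_neg_cancel, Complex.exp_zero]

theorem isUnit_expDiagonal (z : ι → ℂ) (t : ℝ) : IsUnit (expDiagonal z t) :=
  (isUnit_iff_isUnit_det _).2 (isUnit_det_of_right_inverse (expDiagonal_mul_expDiagonal_neg z t))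

theorem inv_expDiagonal (z : ι → ℂ) (t : ℝ) : (expDiagonal z t)⁻¹ = expDiagonal (-z) t :=
  inv_eq_right_inv (expDiagonal_mul_expDiagonal_neg z t)

theorem isBigO_expDiagonal {z : ι → ℂ} {c : ℝ} (hz : ∀ i, (z i).re ≤ c) :
    expDiagonal z =O[atTop] fun t => Real.exp (c * t) := by
  have hentries : (fun t : ℝ => fun i => Complex.exp (t * z i)) =O[atTop]
      fun t => Real.exp (c * t) := by
    refine isBigO_pi.2 fun i => IsBigO.of_bound 1 ?_
    filter_upwards [eventually_ge_atTop 0] with t ht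
    rw [Complex.norm_exp, Complex.re_ofReal_mul, one_mul, Real.norm_of_nonneg (Real.exp_pos _).le,
      Real.exp_le_exp, mul_comm]
    exact mul_le_mul_of_nonneg_right (hz i) ht
  exact ((diagonalLinearMap ι ℂ ℂ).toContinuousLinearMap.isBigO_comp _ _).trans hentries

theorem mul_expDiagonal_mul_eq_add {n S F : Type*} [Fintype S] [DecidableEq S] [Fintype F]
    [DecidableEq F] (R : Matrix n (S ⊕ F) ℂ) (Λ : Matrix (S ⊕ F) n ℂ) (z : S ⊕ F → ℂ) (t : ℝ) :
    R * expDiagonal z t * Λ = R.toCols₁ * expDiagonal (z ∘ Sum.inl) t * Λ.toRows₁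
      + R.toCols₂ * expDiagonal (z ∘ Sum.inr) t * Λ.toRows₂ := by
  have hz : (fun i => Complex.exp (t * z i)) = Sum.elim (fun s => Complex.exp (t * z (Sum.inl s)))
      fun f => Complex.exp (t * z (Sum.inr f)) := by
    funext i; cases i <;> rfl
  conv_lhs => rw [← fromCols_toCols R, ← fromRows_toRows Λ, expDiagonal, hz, ← fromBlocks_diagonal,
    fromCols_mul_fromBlocks, fromCols_mul_fromRows]
  simp [expDiagonal]

end ExpDiagonal

section Exponential

variable {n ι : Type*} [Fintype n] [DecidableEq n] [Fintype ι] [DecidableEq ι]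

theorem exp_mul_mul_eq_of_mul_eq_one {R : Matrix n ι ℂ} {Λ : Matrix ι n ℂ}
    (hΛR : Λ * R = 1) (hRΛ : R * Λ = 1) (D : Matrix ι ι ℂ) :
    exp (R * D * Λ) = R * exp D * Λ := by
  let φ : Matrix ι ι ℂ →+* Matrix n n ℂ :=
    { toFun := fun D => R * D * Λ
      map_one' := by rw [Matrix.mul_one, hRΛ]
      map_mul' := fun D D' => by
        simp only [Matrix.mul_assoc, ← Matrix.mul_assoc Λ R, hΛR, Matrix.one_mul]
      map_zero' := by simp
      map_add' := fun D D' => by simp [Matrix.mul_add, Matrix.add_mul] }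
  exact (map_exp φ ((continuous_const.matrix_mul continuous_id).matrix_mul continuous_const) D).symm

theorem exp_smul_eq_of_mul_eq_mul_diagonal {L : Matrix n n ℂ} {R : Matrix n ι ℂ}
    {Λ : Matrix ι n ℂ} {z : ι → ℂ} (hL : L * R = R * diagonal z) (hΛR : Λ * R = 1)
    (hRΛ : R * Λ = 1) (t : ℝ) :
    exp (t • L) = R * expDiagonal z t * Λ := by
  have hL' : t • L = R * diagonal (fun i => (t : ℂ) * z i) * Λ := by
    have hz : diagonal (fun i => (t : ℂ) * z i) = (t : ℂ) • diagonal z := by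
      rw [← diagonal_smul]; rfl
    rw [hz, Matrix.mul_smul, Matrix.smul_mul, ← hL, Matrix.mul_assoc, hRΛ, Matrix.mul_one,
      Complex.coe_smul]
  rw [hL', exp_mul_mul_eq_of_mul_eq_one hΛR hRΛ, exp_diagonal, expDiagonal]
  congr 2
  funext i
  simp [Pi.exp_def, ← Complex.exp_eq_exp_ℂ]

theorem exp_smul_eq_of_eigensystem {L : Matrix n n ℂ} {r l : ι → n → ℂ} {z : ι → ℂ}
    (heig : ∀ i, L *ᵥ r i = z i • r i)
    (hbi : ∀ i j, star (l i) ⬝ᵥ r j = if i = j then 1 else 0)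
    (hcomp : ∑ i, vecMulVec (r i) (star (l i)) = 1) (t : ℝ) :
    exp (t • L) = (of r)ᵀ * expDiagonal z t * (of l).map star := by
  refine exp_smul_eq_of_mul_eq_mul_diagonal ?_ (map_star_of_mul_transpose_of_eq_one hbi)
    (by rw [transpose_of_mul_map_star_of, hcomp]) t
  ext x i
  rw [mul_diagonal]
  simpa [mul_apply, mulVec, dotProduct, mul_comm] using congr_fun (heig i) x

end Exponential

section NormedRing

variable {R : Type*} [NormedRing R]

theorem norm_inverse_add_le_two_mul {a b : R} (ha : IsUnit a) (hab : IsUnit (a + b))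
    (h : ‖b * a⁻¹ʳ‖ ≤ 1 / 2) : ‖(a + b)⁻¹ʳ‖ ≤ 2 * ‖a⁻¹ʳ‖ := by
  have key : (a + b)⁻¹ʳ = a⁻¹ʳ - (a + b)⁻¹ʳ * (b * a⁻¹ʳ) := by
    have hsub := Ring.inverse_sub_inverse (iff_of_true hab ha)
    rw [show a - (a + b) = -b by abel] at hsub
    calc (a + b)⁻¹ʳ = a⁻¹ʳ + ((a + b)⁻¹ʳ - a⁻¹ʳ) := by abel
      _ = _ := by rw [hsub]; noncomm_ring
  have hle : ‖(a + b)⁻¹ʳ‖ ≤ ‖a⁻¹ʳ‖ + ‖(a + b)⁻¹ʳ‖ * ‖b * a⁻¹ʳ‖ :=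
    calc ‖(a + b)⁻¹ʳ‖ = ‖a⁻¹ʳ - (a + b)⁻¹ʳ * (b * a⁻¹ʳ)‖ := congrArg norm key
      _ ≤ ‖a⁻¹ʳ‖ + ‖(a + b)⁻¹ʳ * (b * a⁻¹ʳ)‖ := norm_sub_le _ _
      _ ≤ _ := by grw [norm_mul_le]
  nlinarith [norm_nonneg (a + b)⁻¹ʳ]

theorem isBigO_inverse_add {α : Type*} {l : Filter α} {a b : α → R} {g : α → ℝ}
    (hunit : ∀ᶠ x in l, IsUnit (a x) ∧ IsUnit (a x + b x))
    (hsmall : Tendsto (fun x => b x * (a x)⁻¹ʳ) l (𝓝 0))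
    (ha : (fun x => (a x)⁻¹ʳ) =O[l] g) : (fun x => (a x + b x)⁻¹ʳ) =O[l] g := by
  refine IsBigO.trans (IsBigO.of_bound 2 ?_) ha
  have hhalf : ∀ᶠ x in l, ‖b x * (a x)⁻¹ʳ‖ ≤ 1 / 2 := by
    simpa using hsmall.norm.eventually (ge_mem_nhds (by norm_num : ‖(0 : R)‖ < 1 / 2))
  filter_upwards [hunit, hhalf] with x ⟨hax, habx⟩ hx
  simpa using norm_inverse_add_le_two_mul hax habx hx

end NormedRing

theorem exists_forall_norm_le_mul_of_isBigO_atTop {E F : Type*} [NormedAddCommGroup E]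
    [NormedAddCommGroup F] {f : ℝ → E} {g : ℝ → F} {a : ℝ} (hf : ContinuousOn f (Set.Ici a))
    (hg : ContinuousOn g (Set.Ici a)) (hg0 : ∀ t ∈ Set.Ici a, g t ≠ 0) (hfg : f =O[atTop] g) :
    ∃ C, 0 ≤ C ∧ ∀ t, a ≤ t → ‖f t‖ ≤ C * ‖g t‖ := by
  obtain ⟨c, hc⟩ := hfg.bound
  obtain ⟨T, hT⟩ := eventually_atTop.1 hc
  have hcompact : f =O[𝓟 (Set.Icc a T)] g :=
    ((hf.mono Set.Icc_subset_Ici_self).isBigO_principal isCompact_Icc (c := (1 : ℝ))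
      (by simp)).trans ((hg.mono Set.Icc_subset_Ici_self).isBigO_rev_principal isCompact_Icc
        (fun t ht => hg0 t ht.1) (1 : ℝ))
  have htail : f =O[𝓟 (Set.Ici T)] g := isBigO_principal.2 ⟨c, hT⟩
  have hall : f =O[𝓟 (Set.Ici a)] g := (hcompact.sup htail).mono
    (by rw [sup_principal]; exact principal_mono.2 Set.Ici_subset_Icc_union_Ici)
  obtain ⟨C, hC⟩ := isBigO_principal.1 hall
  exact ⟨max C 0, le_max_right _ _, fun t ht =>
    (hC t ht).trans (mul_le_mul_of_nonneg_right (le_max_left _ _) (norm_nonneg _))⟩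

theorem ContinuousOn.matrix_inv {X K m : Type*} [TopologicalSpace X] [Field K]
    [TopologicalSpace K] [IsTopologicalDivisionRing K] [Fintype m] [DecidableEq m]
    {A : X → Matrix m m K} {s : Set X} (hA : ContinuousOn A s) (hunit : ∀ x ∈ s, IsUnit (A x)) :
    ContinuousOn (fun x => (A x)⁻¹) s := fun x hx => by
  have hdet := ((isUnit_iff_isUnit_det _).1 (hunit x hx)).ne_zero
  refine (continuousAt_matrix_inv _ ?_).comp_continuousWithinAt (hA x hx)
  rw [Ring.inverse_eq_inv']
  exact continuousAt_inv₀ hdet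

section ExponentialWeights

theorem isBigO_exp_mul_of_le {a b : ℝ} (h : a ≤ b) :
    (fun t => Real.exp (a * t)) =O[atTop] fun t => Real.exp (b * t) := by
  refine IsBigO.of_bound 1 ?_
  filter_upwards [eventually_ge_atTop 0] with t ht
  rw [one_mul, Real.norm_of_nonneg (Real.exp_pos _).le, Real.norm_of_nonneg (Real.exp_pos _).le,
    Real.exp_le_exp]
  exact mul_le_mul_of_nonneg_right h ht

theorem isBigO_const_exp_zero_mul {E : Type*} [Norm E] (C : E) :
    (fun _ => C) =O[atTop] fun t => Real.exp (0 * t) := by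
  simpa using isBigO_const_one ℝ C atTop

variable {l m p : Type*} [Fintype l] [Fintype m] [Fintype p]

theorem Matrix.isBigO_mul {α : Type*} {L : Filter α} {A : α → Matrix l m ℂ} {B : α → Matrix m p ℂ}
    {g₁ g₂ : α → ℝ} (hA : A =O[L] g₁) (hB : B =O[L] g₂) :
    (fun x => A x * B x) =O[L] fun x => g₁ x * g₂ x :=
  (isBigO_of_le _ fun _ => (frobenius_norm_mul _ _).trans (le_abs_self _)).trans
    (hA.norm_left.mul hB.norm_left)

theorem Matrix.isBigO_const_mul_mul_const {α : Type*} {L : Filter α} {A : α → Matrix l m ℂ}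
    {g : α → ℝ} (P : Matrix p l ℂ) (Q : Matrix m p ℂ) (hA : A =O[L] g) :
    (fun x => P * A x * Q) =O[L] g := by
  simpa using Matrix.isBigO_mul (Matrix.isBigO_mul (isBigO_const_one ℝ P L) hA)
    (isBigO_const_one ℝ Q L)

theorem Matrix.isBigO_mul_exp {A : ℝ → Matrix l m ℂ} {B : ℝ → Matrix m p ℂ} {a b c : ℝ}
    (hA : A =O[atTop] fun t => Real.exp (a * t)) (hB : B =O[atTop] fun t => Real.exp (b * t))
    (hc : a + b ≤ c) : (fun t => A t * B t) =O[atTop] fun t => Real.exp (c * t) := by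
  refine (Matrix.isBigO_mul hA hB).trans ?_
  simp_rw [← Real.exp_add, ← add_mul]
  exact isBigO_exp_mul_of_le hc

end ExponentialWeights

section Compression

variable {K n S : Type*} [CommRing K] [Fintype n] [DecidableEq n] [Fintype S] [DecidableEq S]
  {X : Matrix n n K} {V : Matrix n S K} {W : Matrix S n K}

theorem compression_mul (hWV : W * V = 1) :
    (1 - V * W + V * W * X * (V * W)) * V = V * (W * X * V) := by
  simp only [Matrix.add_mul, Matrix.sub_mul, Matrix.one_mul, Matrix.mul_assoc, hWV,
    Matrix.mul_one, sub_self, zero_add]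

theorem isUnit_compression (hWV : W * V = 1) (hY : IsUnit (1 - V * W + V * W * X * (V * W))) :
    IsUnit (W * X * V) := by
  have hYV := compression_mul (X := X) hWV
  set Y := 1 - V * W + V * W * X * (V * W)
  have hleft : W * Y⁻¹ * V * (W * X * V) = 1 :=
    calc W * Y⁻¹ * V * (W * X * V) = W * (Y⁻¹ * Y) * V := by
          simp only [Matrix.mul_assoc, hYV]
      _ = 1 := by rw [nonsing_inv_mul _ ((isUnit_iff_isUnit_det _).1 hY), Matrix.mul_one, hWV]
  exact (isUnit_iff_isUnit_det _).2 (isUnit_det_of_left_inverse hleft)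

theorem mul_compression_inv_mul (hWV : W * V = 1)
    (hY : IsUnit (1 - V * W + V * W * X * (V * W))) :
    X * (V * W) * (1 - V * W + V * W * X * (V * W))⁻¹ * (V * W) = X * V * (W * X * V)⁻¹ * W := by
  have hE := (isUnit_iff_isUnit_det _).1 (isUnit_compression hWV hY)
  have hYV := compression_mul (X := X) hWV
  set Y := 1 - V * W + V * W * X * (V * W)
  have hYinvV : Y⁻¹ * V = V * (W * X * V)⁻¹ :=
    calc Y⁻¹ * V = Y⁻¹ * (V * ((W * X * V) * (W * X * V)⁻¹)) := by
          rw [mul_nonsing_inv _ hE, Matrix.mul_one]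
      _ = (Y⁻¹ * Y) * V * (W * X * V)⁻¹ := by simp only [Matrix.mul_assoc, hYV]
      _ = V * (W * X * V)⁻¹ := by
          rw [nonsing_inv_mul _ ((isUnit_iff_isUnit_det _).1 hY), Matrix.one_mul]
  calc X * (V * W) * Y⁻¹ * (V * W) = X * V * (W * (Y⁻¹ * V)) * W := by
        simp only [Matrix.mul_assoc]
    _ = X * V * (W * X * V)⁻¹ * W := by rw [hYinvV, ← Matrix.mul_assoc W, hWV, Matrix.one_mul]

end Compression

theorem mul_mul_inv_add_sub_inv {K S : Type*} [CommRing K] [Fintype S] [DecidableEq S]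
    {N M D B : Matrix S S K} (hN : IsUnit N) (hM : IsUnit M) (hD : IsUnit D)
    (hE : IsUnit (N * D * M + B)) :
    D * M * (N * D * M + B)⁻¹ - N⁻¹ = -(D * M * (N * D * M + B)⁻¹ * B * (N * D * M)⁻¹) := by
  have hMd := (isUnit_iff_isUnit_det _).1 hM
  have hDd := (isUnit_iff_isUnit_det _).1 hD
  have hA : D * M * (N * D * M)⁻¹ = N⁻¹ := by
    rw [Matrix.mul_inv_rev, Matrix.mul_inv_rev, Matrix.mul_assoc D,
      Matrix.mul_nonsing_inv_cancel_left _ _ hMd, Matrix.mul_nonsing_inv_cancel_left _ _ hDd]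
  have hsub : (N * D * M + B)⁻¹ - (N * D * M)⁻¹ = -((N * D * M + B)⁻¹ * B * (N * D * M)⁻¹) := by
    simp only [nonsing_inv_eq_ringInverse]
    rw [Ring.inverse_sub_inverse (iff_of_true hE ((hN.mul hD).mul hM))]
    noncomm_ring
  calc D * M * (N * D * M + B)⁻¹ - N⁻¹
      = D * M * ((N * D * M + B)⁻¹ - (N * D * M)⁻¹) := by rw [Matrix.mul_sub, hA]
    _ = _ := by rw [hsub]; noncomm_ring

section InverseCompression

variable {S : Type*} [Fintype S] [DecidableEq S]

theorem isBigO_inv_mul_expDiagonal_mul (N M : Matrix S S ℂ) {z : S → ℂ} {a : ℝ}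
    (hz : ∀ s, -(z s).re ≤ a) :
    (fun t => (N * expDiagonal z t * M)⁻¹) =O[atTop] fun t => Real.exp (a * t) := by
  simp only [Matrix.mul_inv_rev, inv_expDiagonal]
  refine Matrix.isBigO_mul_exp (isBigO_const_exp_zero_mul _) (Matrix.isBigO_mul_exp
    (isBigO_expDiagonal (c := a) fun s => ?_) (isBigO_const_exp_zero_mul _) le_rfl) (by simp)
  simpa using hz s

theorem isBigO_inv_mul_expDiagonal_mul_add {N M : Matrix S S ℂ} {B : ℝ → Matrix S S ℂ}
    {z : S → ℂ} {a b : ℝ} (hN : IsUnit N) (hM : IsUnit M) (hz : ∀ s, -(z s).re ≤ a)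
    (hB : B =O[atTop] fun t => Real.exp (b * t)) (hab : a + b < 0)
    (hE : ∀ᶠ t in atTop, IsUnit (N * expDiagonal z t * M + B t)) :
    (fun t => (N * expDiagonal z t * M + B t)⁻¹) =O[atTop] fun t => Real.exp (a * t) := by
  have hAinv := isBigO_inv_mul_expDiagonal_mul N M hz
  simp only [nonsing_inv_eq_ringInverse] at hAinv ⊢
  refine isBigO_inverse_add ?_ ?_ hAinv
  · filter_upwards [hE] with t ht
    exact ⟨(hN.mul (isUnit_expDiagonal z t)).mul hM, ht⟩
  · refine (Matrix.isBigO_mul_exp hB hAinv le_rfl).trans_tendsto ?_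
    exact Real.tendsto_exp_atBot.comp (tendsto_id.const_mul_atTop_of_neg (by linarith))

end InverseCompression

theorem isBigO_compression_sub {n S F : Type*} [Fintype n] [Fintype S] [DecidableEq S]
    [Fintype F] [DecidableEq F] {R : Matrix n (S ⊕ F) ℂ} {Λ : Matrix (S ⊕ F) n ℂ}
    {V : Matrix n S ℂ} {W : Matrix S n ℂ} {z : S ⊕ F → ℂ} {a δ : ℝ}
    (hN : IsUnit (W * R.toCols₁)) (hM : IsUnit (Λ.toRows₁ * V))
    (hS : ∀ s, (z (Sum.inl s)).re ≤ 0) (hS' : ∀ s, -(z (Sum.inl s)).re ≤ a)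
    (hF : ∀ f, (z (Sum.inr f)).re ≤ -(δ + 2 * a)) (ha : 0 ≤ a) (hδ : 0 < δ)
    (hE : ∀ᶠ t in atTop, IsUnit (W * (R * expDiagonal z t * Λ) * V)) :
    (fun t => R * expDiagonal z t * Λ * V * (W * (R * expDiagonal z t * Λ) * V)⁻¹ * W
        - R.toCols₁ * (W * R.toCols₁)⁻¹ * W) =O[atTop] fun t => Real.exp (-δ * t) := by
  have hX := mul_expDiagonal_mul_eq_add R Λ z
  set N := W * R.toCols₁
  set M := Λ.toRows₁ * V
  set DS := expDiagonal (z ∘ Sum.inl)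
  set DF := expDiagonal (z ∘ Sum.inr)
  set B := fun t => W * R.toCols₂ * DF t * (Λ.toRows₂ * V)
  have hXV : ∀ t, R * expDiagonal z t * Λ * V
      = R.toCols₁ * (DS t * M) + R.toCols₂ * (DF t * (Λ.toRows₂ * V)) := fun t => by
    simp only [hX, Matrix.add_mul, Matrix.mul_assoc, M]
  have hWXV : ∀ t, W * (R * expDiagonal z t * Λ) * V = N * DS t * M + B t := fun t => by
    simp only [hX, Matrix.add_mul, Matrix.mul_add, Matrix.mul_assoc, N, M, B]
  have hid : ∀ᶠ t in atTop,
      R.toCols₂ * (DF t * (Λ.toRows₂ * V) * (N * DS t * M + B t)⁻¹) * W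
        - R.toCols₁ * (DS t * M * (N * DS t * M + B t)⁻¹ * B t * (N * DS t * M)⁻¹) * W
      = R * expDiagonal z t * Λ * V * (W * (R * expDiagonal z t * Λ) * V)⁻¹ * W
        - R.toCols₁ * N⁻¹ * W := by
    filter_upwards [hE] with t ht
    rw [hWXV] at ht ⊢
    have hcore : DS t * M * (N * DS t * M + B t)⁻¹ * B t * (N * DS t * M)⁻¹
        = N⁻¹ - DS t * M * (N * DS t * M + B t)⁻¹ := by
      rw [← neg_sub, mul_mul_inv_add_sub_inv hN hM (isUnit_expDiagonal _ t) ht, neg_neg]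
    rw [hXV, hcore]
    simp only [Matrix.mul_sub, Matrix.sub_mul, Matrix.add_mul, Matrix.mul_assoc]
    abel
  have hB : B =O[atTop] fun t => Real.exp (-(δ + 2 * a) * t) :=
    Matrix.isBigO_mul_exp (Matrix.isBigO_mul_exp (isBigO_const_exp_zero_mul _)
      (isBigO_expDiagonal hF) le_rfl) (isBigO_const_exp_zero_mul _) (by simp)
  have hEinv := isBigO_inv_mul_expDiagonal_mul_add (z := z ∘ Sum.inl) hN hM hS' hB (by linarith)
    (by simpa only [hWXV] using hE)
  have hfast : (fun t => DF t * (Λ.toRows₂ * V) * (N * DS t * M + B t)⁻¹)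
      =O[atTop] fun t => Real.exp (-δ * t) :=
    Matrix.isBigO_mul_exp (Matrix.isBigO_mul_exp (isBigO_expDiagonal hF)
      (isBigO_const_exp_zero_mul _) le_rfl) hEinv (by linarith)
  have hslow : (fun t => DS t * M * (N * DS t * M + B t)⁻¹ * B t * (N * DS t * M)⁻¹)
      =O[atTop] fun t => Real.exp (-δ * t) :=
    Matrix.isBigO_mul_exp (Matrix.isBigO_mul_exp (Matrix.isBigO_mul_exp
      (Matrix.isBigO_mul_exp (isBigO_expDiagonal hS) (isBigO_const_exp_zero_mul _) le_rfl)
      hEinv le_rfl) hB le_rfl) (isBigO_inv_mul_expDiagonal_mul (z := z ∘ Sum.inl) N M hS')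
      (by linarith)
  exact ((Matrix.isBigO_const_mul_mul_const _ _ hfast).sub
    (Matrix.isBigO_const_mul_mul_const _ _ hslow)).congr' hid EventuallyEq.rfl

theorem exists_rates_of_gapDelta {S F : Type*} [Fintype S] [Fintype F] [Nonempty S]
    [Nonempty F] {lam : S ⊕ F → ℂ} (hRe : ∀ s, (lam (Sum.inl s)).re ≤ 0) :
    ∃ a, 0 ≤ a ∧ (∀ s, -(lam (Sum.inl s)).re ≤ a)
      ∧ ∀ f, (lam (Sum.inr f)).re ≤ -(gapDelta lam + 2 * a) := by
  set a := Finset.univ.sup' Finset.univ_nonempty fun s : S => -(lam (Sum.inl s)).re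
  have hle : ∀ s, -(lam (Sum.inl s)).re ≤ a := fun s =>
    Finset.le_sup' (fun s : S => -(lam (Sum.inl s)).re) (Finset.mem_univ s)
  refine ⟨a, (neg_nonneg.2 (hRe (Classical.arbitrary S))).trans (hle _), hle, fun f => ?_⟩
  obtain ⟨s, -, hs⟩ := Finset.exists_mem_eq_sup' Finset.univ_nonempty
    fun s : S => -(lam (Sum.inl s)).re
  have hgap := Finset.inf'_le (fun p : S × F => (lam (Sum.inl p.1) - lam (Sum.inr p.2)).re)
    (Finset.mem_univ (s, f))
  rw [Complex.sub_re] at hgap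
  have hδ : gapDelta lam = _ - a := rfl
  linarith

theorem stmt_12_general {n S F : Type*} [Fintype n] [DecidableEq n]
    [Fintype S] [DecidableEq S] [Nonempty S] [Fintype F] [DecidableEq F] [Nonempty F]
    (L : Matrix n n ℂ) (r l r0 l0 : S ⊕ F → n → ℂ) (lam : S ⊕ F → ℂ)
    (heig : ∀ i, L *ᵥ r i = lam i • r i)
    (hbi : ∀ i j, star (l i) ⬝ᵥ r j = if i = j then 1 else 0)
    (hcomp : ∑ i : S ⊕ F, vecMulVec (r i) (star (l i)) = 1)
    (hbi0 : ∀ i j, star (l0 i) ⬝ᵥ r0 j = if i = j then 1 else 0)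
    (hN : IsUnit (overlapN (n := n) l0 r)) (hM : IsUnit (overlapM (n := n) l r0))
    (hRe : ∀ s : S, (lam (Sum.inl s)).re ≤ 0)
    (hgap : 0 < gapDelta (S := S) (F := F) lam)
    (hPi : ∀ t : ℝ, 0 ≤ t →
      IsUnit ((1 - slowProj r0 l0) + slowProj r0 l0 * NormedSpace.exp (t • L) * slowProj r0 l0)) :
    ∃ C : ℝ, 0 ≤ C ∧ ∀ t : ℝ, 0 ≤ t →
      ‖NormedSpace.exp (t • L) * slowProj r0 l0 *
          ((1 - slowProj r0 l0) + slowProj r0 l0 * NormedSpace.exp (t • L) * slowProj r0 l0)⁻¹ *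
          slowProj r0 l0 - asympProj r l0‖
        ≤ C * Real.exp (-(gapDelta (S := S) (F := F) lam) * t) := by
  set R : Matrix n (S ⊕ F) ℂ := (of r)ᵀ
  set Λ : Matrix (S ⊕ F) n ℂ := (of l).map star
  set V : Matrix n S ℂ := (of fun s => r0 (Sum.inl s))ᵀ
  set W : Matrix S n ℂ := (of fun s => l0 (Sum.inl s)).map star
  have hexp := exp_smul_eq_of_eigensystem heig hbi hcomp
  have hWV : W * V = 1 :=
    map_star_of_mul_transpose_of_eq_one fun s s' => by simpa using hbi0 (Sum.inl s) (Sum.inl s')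
  have hP : slowProj r0 l0 = V * W := (transpose_of_mul_map_star_of _ _).symm
  have hPinf : asympProj r l0 = R.toCols₁ * (W * R.toCols₁)⁻¹ * W :=
    (transpose_of_mul_mul_map_star_of _ _ _).symm
  obtain ⟨a, ha, hS, hF⟩ := exists_rates_of_gapDelta hRe
  -- `W * R.toCols₁` and `Λ.toRows₁ * V` unfold to `overlapN l0 r` and `overlapM l r0`.
  have hasymp := isBigO_compression_sub (R := R) (Λ := Λ) (V := V) (W := W) hN hM hRe hS hF ha
    hgap (by
      filter_upwards [eventually_ge_atTop 0] with t ht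
      rw [← hexp]
      exact isUnit_compression hWV (hP ▸ hPi t ht))
  have hbig : (fun t : ℝ => exp (t • L) * slowProj r0 l0 *
      ((1 - slowProj r0 l0) + slowProj r0 l0 * exp (t • L) * slowProj r0 l0)⁻¹ * slowProj r0 l0
        - asympProj r l0) =O[atTop] fun t => Real.exp (-gapDelta lam * t) := by
    refine hasymp.congr' ?_ EventuallyEq.rfl
    filter_upwards [eventually_ge_atTop 0] with t ht
    rw [hPinf, hP, mul_compression_inv_mul hWV (hP ▸ hPi t ht), hexp]
  have hinv : ContinuousOn (fun t : ℝ =>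
      ((1 - slowProj r0 l0) + slowProj r0 l0 * exp (t • L) * slowProj r0 l0)⁻¹) (Set.Ici 0) :=
    ContinuousOn.matrix_inv (by fun_prop) hPi
  obtain ⟨C, hC0, hC⟩ := exists_forall_norm_le_mul_of_isBigO_atTop (by fun_prop) (by fun_prop)
    (fun t _ => (Real.exp_pos _).ne') hbig
  exact ⟨C, hC0, fun t ht => by simpa [Real.norm_of_nonneg (Real.exp_pos _).le] using hC t ht⟩

/-- Under the adiabatic-elimination eigensystem hypotheses, the time-dependent projector
converges exponentially fast to the spectral projector `P∞`:
`‖exp(t • L) * P * Π(t)⁻¹ * P - P∞‖ ≤ C * exp(-δ t)` (Frobenius norm). -/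
theorem stmt_12 {n S F : Type*} [Fintype n] [DecidableEq n]
    [Fintype S] [DecidableEq S] [Nonempty S] [Fintype F] [DecidableEq F] [Nonempty F]
    (L : Matrix n n ℂ) (r l r0 l0 : S ⊕ F → n → ℂ) (lam : S ⊕ F → ℂ)
    (heig : ∀ i, L *ᵥ r i = lam i • r i)
    (hbi : ∀ i j, star (l i) ⬝ᵥ r j = if i = j then 1 else 0)
    (hcomp : ∑ i : S ⊕ F, vecMulVec (r i) (star (l i)) = 1)
    (hbi0 : ∀ i j, star (l0 i) ⬝ᵥ r0 j = if i = j then 1 else 0)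
    (hcomp0 : ∑ i : S ⊕ F, vecMulVec (r0 i) (star (l0 i)) = 1)
    (hN : IsUnit (overlapN (n := n) l0 r)) (hM : IsUnit (overlapM (n := n) l r0))
    (hRe : ∀ s : S, (lam (Sum.inl s)).re ≤ 0)
    (hgap : 0 < gapDelta (S := S) (F := F) lam)
    (hPi : ∀ t : ℝ, 0 ≤ t →
      IsUnit ((1 - slowProj r0 l0) + slowProj r0 l0 * NormedSpace.exp (t • L) * slowProj r0 l0)) :
    ∃ C : ℝ, 0 ≤ C ∧ ∀ t : ℝ, 0 ≤ t →
      ‖NormedSpace.exp (t • L) * slowProj r0 l0 *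
          ((1 - slowProj r0 l0) + slowProj r0 l0 * NormedSpace.exp (t • L) * slowProj r0 l0)⁻¹ *
          slowProj r0 l0 - asympProj r l0‖
        ≤ C * Real.exp (-(gapDelta (S := S) (F := F) lam) * t) :=
  stmt_12_general L r l r0 l0 lam heig hbi hcomp hbi0 hN hM hRe hgap hPi
end

section
/- Under the adiabatic-elimination eigensystem hypotheses (stated in the context), the initial-condition term of the time-convolutionless master equation decays exponentially: there exists a constant C ≥ 0 such that for all real t ≥ 0, ‖(1 − exp(t • L) * P * (Π(t))⁻¹ * P) * exp(t • L) * Q‖ ≤ C * exp(−δ * t), where ‖·‖ is the Frobenius norm on matrices. -/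
/-!
Write `X(t) = exp (t • L) = A_S e^{tΛ_S} B_S + A_F e^{tΛ_F} B_F` (columns `rᵢ`, rows `lᵢᴴ`) and
`P = U V` with `V U = 1`. Since `Π(t) U = U W(t)` for `W(t) = V X(t) U`, we get
`V Π(t)⁻¹ U = W(t)⁻¹`, so `K = X P Π⁻¹ P = X U W⁻¹ V` fixes `X U`. Hence the residual
`(1 - K) X Q` equals `(1 - K) (X - X U M⁻¹ B_S)`, in which the slow modes cancel and only
`A_F e^{tΛ_F} R` is left; it decays like `e^{-(δ + μ) t}` with `μ = max_s (-Re λ_s)`.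
On the other hand `W = N e^{tΛ_S} (1 + ε) M` with `ε(t) = O(e^{-δ t})`, so `‖W⁻¹‖` and hence `‖K‖`
are `O(e^{μ t})` as `t → ∞`, and then for all `t ≥ 0` because `W⁻¹` is continuous there
(`Π(t)` being invertible). The two rates combine to `e^{-δ t}`.
-/

open Matrix NormedSpace

attribute [local instance] Matrix.frobeniusNormedAddCommGroup Matrix.frobeniusNormedSpace
  Matrix.frobeniusNormedRing

attribute [local instance] Matrix.frobeniusNormedAlgebra

open Filter Topology

theorem exists_forall_le_mul_exp_of_eventually {f : ℝ → ℝ} {a : ℝ}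
    (hf : ContinuousOn f (Set.Ici 0)) (h : ∃ C, ∀ᶠ t in atTop, f t ≤ C * Real.exp (a * t)) :
    ∃ C, ∀ t, 0 ≤ t → f t ≤ C * Real.exp (a * t) := by
  obtain ⟨C, hC⟩ := h
  obtain ⟨T, hT⟩ := eventually_atTop.mp hC
  have hg : ContinuousOn (fun t => f t * Real.exp (-(a * t))) (Set.Icc 0 T) :=
    (hf.mono Set.Icc_subset_Ici_self).mul (by fun_prop)
  obtain ⟨B, hB⟩ := isCompact_Icc.bddAbove_image hg
  refine ⟨max B C, fun t ht => ?_⟩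
  rcases le_total t T with htT | hTt
  · have : f t * Real.exp (-(a * t)) ≤ B := hB ⟨t, ⟨ht, htT⟩, rfl⟩
    rw [Real.exp_neg, ← div_eq_mul_inv, div_le_iff₀ (Real.exp_pos _)] at this
    exact this.trans (by gcongr; exact le_max_left _ _)
  · exact (hT t hTt).trans (by gcongr; exact le_max_right _ _)

namespace Matrix

section VecMulVec

variable {m n ι α : Type*} [Fintype ι] [CommSemiring α]

theorem sum_smul_vecMulVec [DecidableEq ι] (c : ι → α) (u : ι → m → α) (w : ι → n → α) :
    ∑ i, c i • vecMulVec (u i) (w i) = (of u)ᵀ * diagonal c * of w := by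
  ext x y
  rw [mul_apply]
  simp only [sum_apply, smul_apply, vecMulVec_apply, mul_diagonal, transpose_apply, of_apply,
    smul_eq_mul]
  exact Finset.sum_congr rfl fun i _ => by ring

theorem sum_vecMulVec (u : ι → m → α) (w : ι → n → α) :
    ∑ i, vecMulVec (u i) (w i) = (of u)ᵀ * of w := by
  ext x y
  simp [mul_apply, sum_apply, vecMulVec_apply]

end VecMulVec

section Algebra

variable {n m k α : Type*} [Fintype n] [Fintype m] [DecidableEq m] [CommRing α]

section Compression

variable [DecidableEq n] {U : Matrix n m α} {V : Matrix m n α} (X : Matrix n n α)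

theorem compression_left_inv (hVU : V * U = 1)
    (hPi : IsUnit (1 - U * V + U * V * X * (U * V))) :
    V * (1 - U * V + U * V * X * (U * V))⁻¹ * U * (V * X * U) = 1 := by
  have hPiU : (1 - U * V + U * V * X * (U * V)) * U = U * (V * X * U) := by
    simp only [Matrix.add_mul, Matrix.sub_mul, Matrix.mul_assoc, hVU, Matrix.mul_one,
      Matrix.one_mul, sub_self, zero_add]
  rw [Matrix.mul_assoc, Matrix.mul_assoc, ← hPiU, ← Matrix.mul_assoc _ _ U,
    nonsing_inv_mul _ ((isUnit_iff_isUnit_det _).mp hPi), Matrix.one_mul, hVU]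

theorem one_sub_compression_mul_eq (hVU : V * U = 1)
    (hPi : IsUnit (1 - U * V + U * V * X * (U * V))) (Z : Matrix m n α) :
    (1 - X * (U * V) * (1 - U * V + U * V * X * (U * V))⁻¹ * (U * V)) * X * (1 - U * V) =
      (1 - X * U * (V * X * U)⁻¹ * V) * (X - X * U * Z) := by
  have hleft := compression_left_inv X hVU hPi
  have hK : X * (U * V) * (1 - U * V + U * V * X * (U * V))⁻¹ * (U * V) =
      X * U * (V * X * U)⁻¹ * V := by
    rw [inv_eq_left_inv hleft]
    simp only [Matrix.mul_assoc]
  have hXU : (1 - X * U * (V * X * U)⁻¹ * V) * (X * U) = 0 := by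
    rw [Matrix.sub_mul, Matrix.one_mul, Matrix.mul_assoc (X * U * _), ← Matrix.mul_assoc V,
      Matrix.mul_assoc _ _ (V * X * U), nonsing_inv_mul _ (isUnit_det_of_left_inverse hleft),
      Matrix.mul_one, sub_self]
  rw [hK, Matrix.mul_sub, Matrix.mul_sub, Matrix.mul_one, ← Matrix.mul_assoc _ (X * U),
    hXU, Matrix.mul_assoc _ X (U * V), ← Matrix.mul_assoc X, ← Matrix.mul_assoc _ (X * U), hXU,
    Matrix.zero_mul, Matrix.zero_mul]

end Compression

theorem sub_mul_inv_mul_eq [Fintype k] {X : Matrix n n α} {A₁ : Matrix n m α} {A₂ : Matrix n k α}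
    {B₁ : Matrix m n α} {B₂ : Matrix k n α} {U : Matrix n m α} (hX : X = A₁ * B₁ + A₂ * B₂)
    (h : IsUnit (B₁ * U)) :
    X - X * U * ((B₁ * U)⁻¹ * B₁) = A₂ * (B₂ - B₂ * U * (B₁ * U)⁻¹ * B₁) := by
  have hA₁ : A₁ * B₁ * U * ((B₁ * U)⁻¹ * B₁) = A₁ * B₁ := by
    rw [Matrix.mul_assoc A₁, Matrix.mul_assoc A₁, ← Matrix.mul_assoc (B₁ * U),
      mul_nonsing_inv _ ((isUnit_iff_isUnit_det _).mp h), Matrix.one_mul]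
  rw [hX, Matrix.add_mul, Matrix.add_mul, hA₁, Matrix.mul_sub]
  simp only [Matrix.mul_assoc]
  abel

end Algebra

section Exponential

theorem exp_mul_eq_mul_exp {m n 𝕂 : Type*} [Fintype m] [DecidableEq m] [Fintype n] [DecidableEq n]
    [RCLike 𝕂] {L : Matrix n n 𝕂} {A : Matrix n m 𝕂} {D : Matrix m m 𝕂} (h : L * A = A * D) :
    exp L * A = A * exp D := by
  have hpow (k : ℕ) : L ^ k * A = A * D ^ k := by
    induction k with
    | zero => simp
    | succ k ih => rw [pow_succ, pow_succ, Matrix.mul_assoc, h, ← Matrix.mul_assoc, ih,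
        Matrix.mul_assoc]
  have hL := (exp_series_hasSum_exp' (𝕂 := 𝕂) L).map (addMonoidHomMulRight A)
    (continuous_id.matrix_mul continuous_const)
  have hD := (exp_series_hasSum_exp' (𝕂 := 𝕂) D).map (addMonoidHomMulLeft A)
    (continuous_const.matrix_mul continuous_id)
  simp only [Function.comp_def, addMonoidHomMulRight_apply, addMonoidHomMulLeft_apply,
    Matrix.smul_mul, Matrix.mul_smul, hpow] at hL hD
  exact hL.unique hD

theorem frobenius_norm_mul₃_le {l m k n 𝕜 : Type*} [Fintype l] [Fintype m] [Fintype k] [Fintype n]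
    [RCLike 𝕜] (A : Matrix l m 𝕜) (B : Matrix m k 𝕜) (C : Matrix k n 𝕜) : ‖A * B * C‖ ≤ ‖A‖ * ‖B‖ * ‖C‖ :=
  (frobenius_norm_mul _ _).trans (by gcongr; exact frobenius_norm_mul _ _)

variable {n ι : Type*} [DecidableEq ι]

noncomputable def expDiag (lam : ι → ℂ) (t : ℝ) : Matrix ι ι ℂ :=
  diagonal fun i => Complex.exp (t * lam i)

theorem continuous_expDiag (lam : ι → ℂ) : Continuous (expDiag lam) := by
  unfold expDiag
  fun_prop

variable [Fintype ι]

theorem norm_diagonal_le {𝕜 : Type*} [RCLike 𝕜] {v : ι → 𝕜} {b : ℝ} (h : ∀ i, ‖v i‖ ≤ b) :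
    ‖diagonal v‖ ≤ Fintype.card ι * b := by
  calc ‖diagonal v‖ = √(∑ i, ‖v i‖ ^ 2) := by
        rw [frobenius_norm_diagonal, EuclideanSpace.norm_eq]
    _ ≤ ∑ i, ‖v i‖ := (Real.sqrt_le_left (by positivity)).mpr <|
        Finset.sum_sq_le_sq_sum_of_nonneg fun i _ => norm_nonneg _
    _ ≤ Fintype.card ι * b := (Finset.sum_le_card_nsmul _ _ _ fun i _ => h i).trans_eq <| by
        rw [nsmul_eq_mul, Finset.card_univ]

theorem norm_expDiag_le {lam : ι → ℂ} {b t : ℝ} (ht : 0 ≤ t) (h : ∀ i, (lam i).re ≤ b) :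
    ‖expDiag lam t‖ ≤ Fintype.card ι * Real.exp (b * t) := by
  refine norm_diagonal_le fun i => ?_
  rw [Complex.norm_exp, Complex.re_ofReal_mul, mul_comm b]
  gcongr
  exact h i

theorem exp_smul_diagonal (lam : ι → ℂ) (t : ℝ) : exp (t • diagonal lam) = expDiag lam t := by
  rw [← diagonal_smul, exp_diagonal, expDiag]
  congr 1
  ext i
  simp [Pi.coe_exp, Complex.exp_eq_exp_ℂ, Complex.real_smul]

theorem expDiag_mul_expDiag_neg (lam : ι → ℂ) (t : ℝ) :
    expDiag lam t * expDiag (-lam) t = 1 := by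
  simp [expDiag, diagonal_mul_diagonal, ← Complex.exp_add]

theorem inv_expDiag (lam : ι → ℂ) (t : ℝ) : (expDiag lam t)⁻¹ = expDiag (-lam) t :=
  inv_eq_right_inv (expDiag_mul_expDiag_neg lam t)

variable [Fintype n] [DecidableEq n]

theorem exp_smul_eq_sum_smul_vecMulVec {L : Matrix n n ℂ} {r w : ι → n → ℂ} {lam : ι → ℂ}
    (heig : ∀ i, L *ᵥ r i = lam i • r i) (hcomp : ∑ i, vecMulVec (r i) (w i) = 1) (t : ℝ) :
    exp (t • L) = ∑ i, Complex.exp (t * lam i) • vecMulVec (r i) (w i) := by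
  have hLr : L * (of r)ᵀ = (of r)ᵀ * diagonal lam := by
    ext x i
    rw [mul_diagonal]
    simpa [mulVec, dotProduct, mul_apply, mul_comm] using congrFun (heig i) x
  have hexp : exp (t • L) * (of r)ᵀ = (of r)ᵀ * expDiag lam t := by
    rw [← exp_smul_diagonal]
    exact exp_mul_eq_mul_exp (by rw [Matrix.smul_mul, Matrix.mul_smul, hLr])
  rw [sum_smul_vecMulVec, ← expDiag, ← hexp, Matrix.mul_assoc, ← sum_vecMulVec, hcomp,
    Matrix.mul_one]

theorem exp_smul_eq_slow_add_fast {S F : Type*} [Fintype S] [DecidableEq S] [Fintype F]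
    [DecidableEq F] {L : Matrix n n ℂ} {r w : S ⊕ F → n → ℂ} {lam : S ⊕ F → ℂ}
    (heig : ∀ i, L *ᵥ r i = lam i • r i) (hcomp : ∑ i, vecMulVec (r i) (w i) = 1) (t : ℝ) :
    exp (t • L) =
      (of fun s => r (.inl s))ᵀ * expDiag (fun s => lam (.inl s)) t * of (fun s => w (.inl s)) +
      (of fun f => r (.inr f))ᵀ * expDiag (fun f => lam (.inr f)) t * of (fun f => w (.inr f)) := by
  rw [exp_smul_eq_sum_smul_vecMulVec heig hcomp, Fintype.sum_sum_type, sum_smul_vecMulVec,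
    sum_smul_vecMulVec]
  rfl

end Exponential

variable {n S F : Type*} [Fintype n] [DecidableEq n] [Fintype S] [DecidableEq S] [Fintype F]
  [DecidableEq F]

theorem eventually_norm_inv_one_add_le {β : Type*} {l : Filter β} {ε : β → Matrix S S ℂ}
    (hε : Tendsto ε l (𝓝 0)) : ∀ᶠ x in l, ‖(1 + ε x)⁻¹‖ ≤ ‖(1 : Matrix S S ℂ)‖ + 1 := by
  have hinv : ContinuousAt Inv.inv (1 : Matrix S S ℂ) :=
    continuousAt_matrix_inv _ <| by
      rw [det_one]
      exact NormedRing.inverse_continuousAt (1 : ℂˣ)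
  have h1 : Tendsto (fun x => (1 + ε x)⁻¹) l (𝓝 1) := by
    simpa [Function.comp_def] using
      hinv.tendsto.comp (by simpa using (tendsto_const_nhds (x := 1)).add hε)
  exact h1.norm.eventually_le_const (lt_add_one _)

theorem tendsto_expDiag_mul_mul_expDiag {lamS : S → ℂ} {lamF : F → ℂ} {μ a : ℝ}
    (hS : ∀ s, -(lamS s).re ≤ μ) (hF : ∀ f, (lamF f).re ≤ -a) (hμa : μ < a)
    (K : Matrix S F ℂ) (K' : Matrix F S ℂ) :
    Tendsto (fun t => expDiag (-lamS) t * K * expDiag lamF t * K') atTop (𝓝 0) := by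
  have hdecay : Tendsto (fun t => Real.exp (-((a - μ) * t))) atTop (𝓝 0) :=
    Real.tendsto_exp_neg_atTop_nhds_zero.comp (tendsto_id.const_mul_atTop (by linarith))
  refine squeeze_zero_norm' ?_
    (by simpa using hdecay.const_mul (Fintype.card S * ‖K‖ * Fintype.card F * ‖K'‖))
  filter_upwards [eventually_ge_atTop 0] with t ht
  calc ‖expDiag (-lamS) t * K * expDiag lamF t * K'‖
      ≤ ‖expDiag (-lamS) t‖ * ‖K‖ * ‖expDiag lamF t‖ * ‖K'‖ := by
        refine (frobenius_norm_mul _ _).trans ?_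
        gcongr
        refine (frobenius_norm_mul _ _).trans ?_
        gcongr
        exact frobenius_norm_mul _ _
    _ ≤ (Fintype.card S * Real.exp (μ * t)) * ‖K‖ * (Fintype.card F * Real.exp (-a * t)) *
          ‖K'‖ := by
        gcongr
        · exact norm_expDiag_le ht fun s => by simpa using hS s
        · exact norm_expDiag_le ht hF
    _ = Fintype.card S * ‖K‖ * Fintype.card F * ‖K'‖ * Real.exp (-((a - μ) * t)) := by
        rw [show -((a - μ) * t) = μ * t + -a * t by ring, Real.exp_add]
        ring

theorem eventually_norm_inv_expDiag_add_le {N M : Matrix S S ℂ} {N' : Matrix S F ℂ} {M' : Matrix F S ℂ}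
    {lamS : S → ℂ} {lamF : F → ℂ} {μ a : ℝ} (hN : IsUnit N) (hM : IsUnit M)
    (hS : ∀ s, -(lamS s).re ≤ μ) (hF : ∀ f, (lamF f).re ≤ -a) (hμa : μ < a) :
    ∃ C, ∀ᶠ t in atTop,
      ‖(N * expDiag lamS t * M + N' * expDiag lamF t * M')⁻¹‖ ≤ C * Real.exp (μ * t) := by
  set ε := fun t => expDiag (-lamS) t * (N⁻¹ * N') * expDiag lamF t * (M' * M⁻¹)
  have hfactor (t : ℝ) : N * expDiag lamS t * M + N' * expDiag lamF t * M' =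
      N * expDiag lamS t * (1 + ε t) * M := by
    have hN' := mul_nonsing_inv N ((isUnit_iff_isUnit_det _).mp hN)
    have hM' := nonsing_inv_mul M ((isUnit_iff_isUnit_det _).mp hM)
    simp only [ε, Matrix.mul_add, Matrix.add_mul, Matrix.mul_one, Matrix.mul_assoc, hM',
      ← Matrix.mul_assoc (expDiag lamS t), expDiag_mul_expDiag_neg, Matrix.one_mul,
      ← Matrix.mul_assoc N N⁻¹, hN']
  refine ⟨‖M⁻¹‖ * (‖(1 : Matrix S S ℂ)‖ + 1) * Fintype.card S * ‖N⁻¹‖, ?_⟩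
  filter_upwards [eventually_ge_atTop 0,
    eventually_norm_inv_one_add_le (tendsto_expDiag_mul_mul_expDiag hS hF hμa _ _)]
    with t ht hε
  rw [hfactor, mul_inv_rev, mul_inv_rev, mul_inv_rev, inv_expDiag]
  calc ‖M⁻¹ * ((1 + ε t)⁻¹ * (expDiag (-lamS) t * N⁻¹))‖
      ≤ ‖M⁻¹‖ * (‖(1 + ε t)⁻¹‖ * (‖expDiag (-lamS) t‖ * ‖N⁻¹‖)) := by
        refine (norm_mul_le _ _).trans ?_
        gcongr
        refine (norm_mul_le _ _).trans ?_
        gcongr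
        exact norm_mul_le _ _
    _ ≤ ‖M⁻¹‖ * ((‖(1 : Matrix S S ℂ)‖ + 1) * (Fintype.card S * Real.exp (μ * t) * ‖N⁻¹‖)) := by
        gcongr
        exact norm_expDiag_le ht fun s => by simpa using hS s
    _ = _ := by ring

theorem exists_norm_inv_expDiag_add_le {N M : Matrix S S ℂ} {N' : Matrix S F ℂ} {M' : Matrix F S ℂ}
    {lamS : S → ℂ} {lamF : F → ℂ} {μ a : ℝ} (hN : IsUnit N) (hM : IsUnit M)
    (hS : ∀ s, -(lamS s).re ≤ μ) (hF : ∀ f, (lamF f).re ≤ -a) (hμa : μ < a)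
    (hW : ∀ t, 0 ≤ t → IsUnit (N * expDiag lamS t * M + N' * expDiag lamF t * M')) :
    ∃ C, ∀ t, 0 ≤ t →
      ‖(N * expDiag lamS t * M + N' * expDiag lamF t * M')⁻¹‖ ≤ C * Real.exp (μ * t) := by
  set W : ℝ → Matrix S S ℂ := fun t => N * expDiag lamS t * M + N' * expDiag lamF t * M'
  have hcont : Continuous W := by
    have := continuous_expDiag lamS
    have := continuous_expDiag lamF
    fun_prop
  refine exists_forall_le_mul_exp_of_eventually (ContinuousOn.norm fun t ht => ?_)
    (eventually_norm_inv_expDiag_add_le hN hM hS hF hμa)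
  have hdet := (isUnit_iff_isUnit_det _).mp (hW t ht)
  exact ((continuousAt_matrix_inv (W t) (NormedRing.inverse_continuousAt hdet.unit)).comp
    (f := W) hcont.continuousAt).continuousWithinAt

theorem norm_mul_expDiag_mul_add_le {AS : Matrix n S ℂ} {BS : Matrix S n ℂ} {AF : Matrix n F ℂ}
    {BF : Matrix F n ℂ} {lamS : S → ℂ} {lamF : F → ℂ} {t : ℝ} (ht : 0 ≤ t)
    (hS : ∀ s, (lamS s).re ≤ 0) (hF : ∀ f, (lamF f).re ≤ 0) :
    ‖AS * expDiag lamS t * BS + AF * expDiag lamF t * BF‖ ≤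
      ‖AS‖ * Fintype.card S * ‖BS‖ + ‖AF‖ * Fintype.card F * ‖BF‖ := by
  refine (norm_add_le _ _).trans (add_le_add ?_ ?_)
  · refine (frobenius_norm_mul₃_le _ _ _).trans ?_
    gcongr
    simpa using norm_expDiag_le (b := 0) ht hS
  · refine (frobenius_norm_mul₃_le _ _ _).trans ?_
    gcongr
    simpa using norm_expDiag_le (b := 0) ht hF

theorem exists_norm_compression_residual_le {X : ℝ → Matrix n n ℂ} {U AS : Matrix n S ℂ}
    {V BS : Matrix S n ℂ} {AF : Matrix n F ℂ} {BF : Matrix F n ℂ} {lamS : S → ℂ} {lamF : F → ℂ}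
    {μ δ : ℝ} (hX : ∀ t, X t = AS * expDiag lamS t * BS + AF * expDiag lamF t * BF)
    (hVU : V * U = 1) (hN : IsUnit (V * AS)) (hM : IsUnit (BS * U))
    (hRe : ∀ s, (lamS s).re ≤ 0) (hμ : 0 ≤ μ) (hS : ∀ s, -(lamS s).re ≤ μ)
    (hF : ∀ f, (lamF f).re ≤ -(δ + μ)) (hδ : 0 < δ)
    (hPi : ∀ t, 0 ≤ t → IsUnit (1 - U * V + U * V * X t * (U * V))) :
    ∃ C, 0 ≤ C ∧ ∀ t, 0 ≤ t →
      ‖(1 - X t * (U * V) * (1 - U * V + U * V * X t * (U * V))⁻¹ * (U * V)) * X t *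
        (1 - U * V)‖ ≤ C * Real.exp (-δ * t) := by
  have hW (t : ℝ) : V * X t * U =
      V * AS * expDiag lamS t * (BS * U) + V * AF * expDiag lamF t * (BF * U) := by
    simp only [hX, Matrix.mul_add, Matrix.add_mul, Matrix.mul_assoc]
  obtain ⟨CW, hCW⟩ := exists_norm_inv_expDiag_add_le hN hM hS hF (by linarith) fun t ht =>
    hW t ▸ (isUnit_iff_isUnit_det _).mpr
      (isUnit_det_of_left_inverse (compression_left_inv (X t) hVU (hPi t ht)))
  have hCW0 : 0 ≤ CW := by simpa using (norm_nonneg _).trans (hCW 0 le_rfl)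
  set CX := ‖AS‖ * Fintype.card S * ‖BS‖ + ‖AF‖ * Fintype.card F * ‖BF‖
  have hCX (t : ℝ) (ht : 0 ≤ t) : ‖X t‖ ≤ CX :=
    hX t ▸ norm_mul_expDiag_mul_add_le ht hRe fun f => (hF f).trans (by linarith)
  set R := BF - BF * U * (BS * U)⁻¹ * BS
  refine ⟨(‖(1 : Matrix n n ℂ)‖ + CX * ‖U‖ * CW * ‖V‖) * ‖AF‖ * Fintype.card F * ‖R‖,
    by positivity, fun t ht => ?_⟩
  rw [one_sub_compression_mul_eq _ hVU (hPi t ht) ((BS * U)⁻¹ * BS),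
    sub_mul_inv_mul_eq (hX t) hM]
  have hK : ‖X t * U * (V * X t * U)⁻¹ * V‖ ≤ CX * ‖U‖ * (CW * Real.exp (μ * t)) * ‖V‖ := by
    refine (frobenius_norm_mul _ _).trans ?_
    gcongr
    refine (frobenius_norm_mul₃_le _ _ _).trans ?_
    gcongr
    · exact hCX t ht
    · rw [hW]
      exact hCW t ht
  have hgrowth : 1 ≤ Real.exp (μ * t) := Real.one_le_exp (mul_nonneg hμ ht)
  calc ‖(1 - X t * U * (V * X t * U)⁻¹ * V) * (AF * expDiag lamF t * R)‖
      ≤ ‖1 - X t * U * (V * X t * U)⁻¹ * V‖ * (‖AF‖ * ‖expDiag lamF t‖ * ‖R‖) :=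
        (frobenius_norm_mul _ _).trans (by gcongr; exact frobenius_norm_mul₃_le _ _ _)
    _ ≤ (‖(1 : Matrix n n ℂ)‖ + CX * ‖U‖ * (CW * Real.exp (μ * t)) * ‖V‖) *
          (‖AF‖ * (Fintype.card F * Real.exp (-(δ + μ) * t)) * ‖R‖) := by
        gcongr
        · exact (norm_sub_le _ _).trans (by gcongr)
        · exact norm_expDiag_le ht hF
    _ ≤ (‖(1 : Matrix n n ℂ)‖ + CX * ‖U‖ * CW * ‖V‖) * Real.exp (μ * t) *
          (‖AF‖ * (Fintype.card F * Real.exp (-(δ + μ) * t)) * ‖R‖) := by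
        gcongr
        have := le_mul_of_one_le_right (norm_nonneg (1 : Matrix n n ℂ)) hgrowth
        linarith
    _ = _ := by
        rw [show -δ * t = μ * t + -(δ + μ) * t by ring, Real.exp_add]
        ring

end Matrix

theorem exists_decay_rates {S F : Type*} [Fintype S] [Nonempty S] [Fintype F] [Nonempty F]
    {lam : S ⊕ F → ℂ} (hRe : ∀ s : S, (lam (Sum.inl s)).re ≤ 0) :
    ∃ μ : ℝ, 0 ≤ μ ∧ (∀ s, -(lam (Sum.inl s)).re ≤ μ) ∧
      ∀ f, (lam (Sum.inr f)).re ≤ -(gapDelta lam + μ) := by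
  obtain ⟨s₀⟩ := ‹Nonempty S›
  refine ⟨Finset.univ.sup' Finset.univ_nonempty fun s : S => -(lam (Sum.inl s)).re, ?_,
    fun s => Finset.le_sup' (fun s : S => -(lam (Sum.inl s)).re) (Finset.mem_univ s),
    fun f => ?_⟩
  · exact (neg_nonneg.mpr (hRe s₀)).trans
      (Finset.le_sup' (fun s : S => -(lam (Sum.inl s)).re) (Finset.mem_univ s₀))
  · have := Finset.inf'_le (fun p : S × F => (lam (Sum.inl p.1) - lam (Sum.inr p.2)).re)
      (Finset.mem_univ (s₀, f))
    simp only [gapDelta, sub_add_cancel, Complex.sub_re] at this ⊢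
    linarith [hRe s₀]

theorem stmt_13_general {n S F : Type*} [Fintype n] [DecidableEq n]
    [Fintype S] [DecidableEq S] [Nonempty S] [Fintype F] [DecidableEq F] [Nonempty F]
    (L : Matrix n n ℂ) (r l r0 l0 : S ⊕ F → n → ℂ) (lam : S ⊕ F → ℂ)
    (heig : ∀ i, L *ᵥ r i = lam i • r i)
    (hcomp : ∑ i : S ⊕ F, vecMulVec (r i) (star (l i)) = 1)
    (hbi0 : ∀ i j, star (l0 i) ⬝ᵥ r0 j = if i = j then 1 else 0)
    (hN : IsUnit (overlapN (n := n) l0 r)) (hM : IsUnit (overlapM (n := n) l r0))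
    (hRe : ∀ s : S, (lam (Sum.inl s)).re ≤ 0)
    (hgap : 0 < gapDelta (S := S) (F := F) lam)
    (hPi : ∀ t : ℝ, 0 ≤ t →
      IsUnit ((1 - slowProj r0 l0) + slowProj r0 l0 * exp (t • L) * slowProj r0 l0)) :
    ∃ C : ℝ, 0 ≤ C ∧ ∀ t : ℝ, 0 ≤ t →
      ‖(1 - exp (t • L) * slowProj r0 l0 *
            ((1 - slowProj r0 l0) + slowProj r0 l0 * exp (t • L) * slowProj r0 l0)⁻¹ *
            slowProj r0 l0) * exp (t • L) * (1 - slowProj r0 l0)‖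
        ≤ C * Real.exp (-(gapDelta (S := S) (F := F) lam) * t) := by
  obtain ⟨μ, hμ, hS, hF⟩ := exists_decay_rates hRe
  have hP : slowProj r0 l0 =
      (of fun s => r0 (.inl s))ᵀ * of fun s => star (l0 (.inl s)) :=
    sum_vecMulVec _ _
  have hVU : (of fun s => star (l0 (.inl s))) * (of fun s => r0 (.inl s))ᵀ = 1 := by
    ext s s'
    have h := hbi0 (.inl s) (.inl s')
    simp only [Sum.inl.injEq] at h
    rw [one_apply, ← h]
    rfl
  rw [hP] at hPi ⊢
  exact exists_norm_compression_residual_le (exp_smul_eq_slow_add_fast heig hcomp) hVU hN hM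
    hRe hμ hS hF hgap hPi

/-- Under the adiabatic-elimination eigensystem hypotheses, the initial-condition term
`J(t) = (1 - P(t)) * exp(t • L) * Q` of the TCL master equation decays exponentially:
`‖(1 - exp(t • L) * P * Π(t)⁻¹ * P) * exp(t • L) * Q‖ ≤ C * exp(-δ t)` (Frobenius norm). -/
theorem stmt_13 {n S F : Type*} [Fintype n] [DecidableEq n]
    [Fintype S] [DecidableEq S] [Nonempty S] [Fintype F] [DecidableEq F] [Nonempty F]
    (L : Matrix n n ℂ) (r l r0 l0 : S ⊕ F → n → ℂ) (lam : S ⊕ F → ℂ)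
    (heig : ∀ i, L *ᵥ r i = lam i • r i)
    (hbi : ∀ i j, star (l i) ⬝ᵥ r j = if i = j then 1 else 0)
    (hcomp : ∑ i : S ⊕ F, vecMulVec (r i) (star (l i)) = 1)
    (hbi0 : ∀ i j, star (l0 i) ⬝ᵥ r0 j = if i = j then 1 else 0)
    (hcomp0 : ∑ i : S ⊕ F, vecMulVec (r0 i) (star (l0 i)) = 1)
    (hN : IsUnit (overlapN (n := n) l0 r)) (hM : IsUnit (overlapM (n := n) l r0))
    (hRe : ∀ s : S, (lam (Sum.inl s)).re ≤ 0)
    (hgap : 0 < gapDelta (S := S) (F := F) lam)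
    (hPi : ∀ t : ℝ, 0 ≤ t →
      IsUnit ((1 - slowProj r0 l0) + slowProj r0 l0 * exp (t • L) * slowProj r0 l0)) :
    ∃ C : ℝ, 0 ≤ C ∧ ∀ t : ℝ, 0 ≤ t →
      ‖(1 - exp (t • L) * slowProj r0 l0 *
            ((1 - slowProj r0 l0) + slowProj r0 l0 * exp (t • L) * slowProj r0 l0)⁻¹ *
            slowProj r0 l0) * exp (t • L) * (1 - slowProj r0 l0)‖
        ≤ C * Real.exp (-(gapDelta (S := S) (F := F) lam) * t) :=
  stmt_13_general L r l r0 l0 lam heig hcomp hbi0 hN hM hRe hgap hPi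
end

section
/- Let L be an n×n complex matrix with a biorthonormal complete eigensystem indexed by a finite type ι = S ⊕ F (a disjoint sum): L *ᵥ (r i) = λ i • (r i), star (l i) ⬝ᵥ (r j) = if i = j then 1 else 0, and ∑_{i∈ι} vecMulVec (r i) (star (l i)) = 1. Suppose Δ > 0 is a real number with Re(λ f) ≤ −Δ for every f ∈ F. Then for all real t ≥ 0, ‖exp(t • L) − ∑_{s∈S} Complex.exp(λ s * t) • vecMulVec (r s) (star (l s))‖ ≤ (∑_{f∈F} ‖vecMulVec (r f) (star (l f))‖) * Real.exp(−Δ * t), where ‖·‖ is the Frobenius norm on matrices. -/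
open Matrix NormedSpace

attribute [local instance] Matrix.frobeniusNormedAddCommGroup Matrix.frobeniusNormedSpace
  Matrix.frobeniusNormedRing Matrix.frobeniusNormedAlgebra

/-!
On the right eigenvector `r i` the propagator `exp (t • L)` acts as the scalar `exp (λ i t)`,
so the completeness relation `∑ r i (l i)ᴴ = 1` gives the spectral expansion
`exp (t • L) = ∑ exp (λ i t) • r i (l i)ᴴ`. Subtracting the slow terms leaves the fast ones,
each damped by `|exp (λ f t)| = exp (Re (λ f) t) ≤ exp (-Δ t)`.
-/

theorem pow_mul_of_mul_eq_smul {R A : Type*} [CommSemiring R] [Semiring A] [Algebra R A]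
    {a p : A} {μ : R} (h : a * p = μ • p) (k : ℕ) :
    a ^ k * p = μ ^ k • p := by
  induction k with
  | zero => simp
  | succ k ih => rw [pow_succ', mul_assoc, ih, mul_smul_comm, h, smul_smul, pow_succ]

section ExpEigen

open scoped Nat

variable {𝕂 𝔸 : Type*} [RCLike 𝕂] [NormedRing 𝔸] [NormedAlgebra 𝕂 𝔸] [CompleteSpace 𝔸]

theorem exp_mul_of_mul_eq_smul {a p : 𝔸} {μ : 𝕂} (h : a * p = μ • p) :
    exp a * p = exp μ • p := by
  have hμ : Summable fun k : ℕ => (k !⁻¹ : 𝕂) * μ ^ k := expSeries_summable' (𝕂 := 𝕂) μ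
  calc exp a * p = ∑' k : ℕ, ((k !⁻¹ : 𝕂) • a ^ k) * p := by
        rw [exp_eq_tsum 𝕂, (expSeries_summable' (𝕂 := 𝕂) a).tsum_mul_right]
    _ = ∑' k : ℕ, ((k !⁻¹ : 𝕂) * μ ^ k) • p := by
        simp only [smul_mul_assoc, pow_mul_of_mul_eq_smul h, smul_smul]
    _ = exp μ • p := by
        rw [hμ.tsum_smul_const, exp_eq_tsum 𝕂]
        simp only [smul_eq_mul]

end ExpEigen

theorem Matrix.exp_eq_sum_smul_vecMulVec {n ι : Type*} [Fintype n] [DecidableEq n] [Fintype ι]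
    (A : Matrix n n ℂ) (r w : ι → n → ℂ) (μ : ι → ℂ) (heig : ∀ i, A *ᵥ r i = μ i • r i)
    (hcomp : ∑ i, vecMulVec (r i) (w i) = 1) :
    exp A = ∑ i, Complex.exp (μ i) • vecMulVec (r i) (w i) := by
  have hproj : ∀ i, A * vecMulVec (r i) (w i) = μ i • vecMulVec (r i) (w i) := fun i => by
    rw [mul_vecMulVec, heig, smul_vecMulVec]
  calc exp A = exp A * ∑ i, vecMulVec (r i) (w i) := by rw [hcomp, mul_one]
    _ = ∑ i, Complex.exp (μ i) • vecMulVec (r i) (w i) := by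
        rw [Finset.mul_sum]
        exact Finset.sum_congr rfl fun i _ =>
          (exp_mul_of_mul_eq_smul (hproj i)).trans (by rw [Complex.exp_eq_exp_ℂ])

theorem Complex.norm_exp_mul_ofReal_le {z : ℂ} {Δ t : ℝ} (hz : z.re ≤ -Δ) (ht : 0 ≤ t) :
    ‖Complex.exp (z * t)‖ ≤ Real.exp (-Δ * t) := by
  rw [Complex.norm_exp, Complex.re_mul_ofReal]
  exact Real.exp_le_exp.2 (mul_le_mul_of_nonneg_right hz ht)

theorem norm_sum_smul_le_sum_norm_mul {ι 𝕜 E : Type*} [Fintype ι] [NormedField 𝕜]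
    [SeminormedAddCommGroup E] [NormedSpace 𝕜 E] (c : ι → 𝕜) (P : ι → E) {B : ℝ}
    (hc : ∀ i, ‖c i‖ ≤ B) : ‖∑ i, c i • P i‖ ≤ (∑ i, ‖P i‖) * B := by
  rw [Finset.sum_mul]
  refine (norm_sum_le _ _).trans (Finset.sum_le_sum fun i _ => ?_)
  rw [norm_smul, mul_comm]
  exact mul_le_mul_of_nonneg_left (hc i) (norm_nonneg _)

theorem stmt_15_general {n S F : Type*} [Fintype n] [DecidableEq n]
    [Fintype S] [Fintype F]
    (L : Matrix n n ℂ) (r l : S ⊕ F → n → ℂ) (lam : S ⊕ F → ℂ)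
    (heig : ∀ i, L *ᵥ r i = lam i • r i)
    (hcomp : ∑ i : S ⊕ F, vecMulVec (r i) (star (l i)) = 1)
    (Δ : ℝ) (hfast : ∀ f : F, (lam (Sum.inr f)).re ≤ -Δ)
    (t : ℝ) (ht : 0 ≤ t) :
    ‖exp (t • L)
        - ∑ s : S, Complex.exp (lam (Sum.inl s) * t) •
            vecMulVec (r (Sum.inl s)) (star (l (Sum.inl s)))‖
      ≤ (∑ f : F, ‖vecMulVec (r (Sum.inr f)) (star (l (Sum.inr f)))‖) * Real.exp (-Δ * t) := by
  have heig_t : ∀ i, (t • L) *ᵥ r i = (lam i * t) • r i := fun i => by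
    rw [smul_mulVec, heig, ← Complex.coe_smul, smul_smul, mul_comm]
  rw [exp_eq_sum_smul_vecMulVec _ _ _ _ heig_t hcomp, Fintype.sum_sum_type, add_sub_cancel_left]
  exact norm_sum_smul_le_sum_norm_mul _ _ fun f => Complex.norm_exp_mul_ofReal_le (hfast f) ht

/-- If the fast eigenvalues satisfy `Re(λ f) ≤ -Δ`, the propagator is exponentially close
to its slow part: for `t ≥ 0`,
`‖exp(t • L) - ∑_{s∈S} exp(λ s t) • r s (l s)ᴴ‖ ≤ (∑_{f∈F} ‖r f (l f)ᴴ‖) * exp(-Δ t)`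
in the Frobenius norm. -/
theorem stmt_15 {n S F : Type*} [Fintype n] [DecidableEq n]
    [Fintype S] [DecidableEq S] [Fintype F] [DecidableEq F]
    (L : Matrix n n ℂ) (r l : S ⊕ F → n → ℂ) (lam : S ⊕ F → ℂ)
    (heig : ∀ i, L *ᵥ r i = lam i • r i)
    (hbi : ∀ i j, star (l i) ⬝ᵥ r j = if i = j then 1 else 0)
    (hcomp : ∑ i : S ⊕ F, vecMulVec (r i) (star (l i)) = 1)
    (Δ : ℝ) (hΔ : 0 < Δ) (hfast : ∀ f : F, (lam (Sum.inr f)).re ≤ -Δ)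
    (t : ℝ) (ht : 0 ≤ t) :
    ‖exp (t • L)
        - ∑ s : S, Complex.exp (lam (Sum.inl s) * t) •
            vecMulVec (r (Sum.inl s)) (star (l (Sum.inl s)))‖
      ≤ (∑ f : F, ‖vecMulVec (r (Sum.inr f)) (star (l (Sum.inr f)))‖) * Real.exp (-Δ * t) :=
  stmt_15_general L r l lam heig hcomp Δ hfast t ht
end

section
/- Let ι = S ⊕ F be a disjoint sum of finite types and let (Π i)_{i∈ι} be n×n complex matrices with Π i * Π j = (if i = j then Π i else 0) and ∑_{i∈ι} Π i = 1. Let λ : ι → ℂ, set L₀ := ∑_{i∈ι} λ i • Π i, P := ∑_{s∈S} Π s, and Q := ∑_{f∈F} Π f, and assume Re(λ s − λ f) > 0 for all s ∈ S and f ∈ F. Then for every n×n complex matrix L₁, the function τ ↦ exp(τ • L₀) * Q * L₁ * P * exp(−τ • L₀) is integrable on [0, ∞) and ∫_{0}^{∞} exp(τ • L₀) * Q * L₁ * P * exp(−τ • L₀) dτ = ∑_{s∈S} ∑_{f∈F} (λ s − λ f)⁻¹ • (Π f * L₁ * Π s). -/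
/-!
The projections `Π i` make `a ↦ ∑ a i • Π i` a continuous algebra homomorphism `(ι → ℂ) → Mₙ(ℂ)`,
and such homomorphisms commute with `exp`; hence `exp (τ • L₀) = ∑ exp (τ λ i) • Π i`. Sandwiching
`L₁` between `Q` and `P` then turns the integrand into
`∑ s f, exp ((λ f - λ s) τ) • (Π f * L₁ * Π s)`, a finite sum of exponentials that decay by the
spectral gap, each integrating over `(0, ∞)` to `(λ s - λ f)⁻¹`.
-/

open Matrix NormedSpace

attribute [local instance] Matrix.frobeniusNormedAddCommGroup Matrix.frobeniusNormedSpace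
  Matrix.frobeniusNormedRing

attribute [local instance] Matrix.frobeniusNormedAlgebra

namespace CompleteOrthogonalIdempotents

section AlgHom

variable {ι R A : Type*} [Fintype ι] [DecidableEq ι] [CommSemiring R] [Semiring A] [Algebra R A]
  {e : ι → A}

@[simps]
def sumSMulAlgHom (he : CompleteOrthogonalIdempotents e) : (ι → R) →ₐ[R] A where
  toFun a := ∑ i, a i • e i
  map_one' := by simp [he.complete]
  map_mul' a b := by
    simp_rw [Finset.sum_mul_sum, smul_mul_smul_comm, he.mul_eq, smul_ite, smul_zero,
      Finset.sum_ite_eq, Finset.mem_univ, if_true, Pi.mul_apply]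
  map_zero' := by simp
  map_add' _ _ := by simp [add_smul, Finset.sum_add_distrib]
  commutes' r := by simp [Algebra.algebraMap_eq_smul_one, ← Finset.smul_sum, he.complete]

end AlgHom

variable {ι 𝕜 A : Type*} [Fintype ι] [DecidableEq ι] [RCLike 𝕜] [NormedRing A] [NormedAlgebra 𝕜 A]
  {e : ι → A}

lemma exp_sum_smul (he : CompleteOrthogonalIdempotents e) (c : ι → 𝕜) :
    exp (∑ i, c i • e i) = ∑ i, exp (c i) • e i := by
  have hcont : Continuous (he.sumSMulAlgHom (R := 𝕜)) := by
    change Continuous fun a : ι → 𝕜 => ∑ i, a i • e i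
    fun_prop
  simpa [Pi.exp_def] using (map_exp_of_mem_ball (𝕂 := 𝕜) (he.sumSMulAlgHom (R := 𝕜)) hcont c
    ((expSeries_radius_eq_top 𝕜 (ι → 𝕜)).symm ▸ edist_lt_top _ _)).symm

end CompleteOrthogonalIdempotents

namespace OrthogonalIdempotents

variable {ι R A : Type*} [Fintype ι] [DecidableEq ι] [CommSemiring R] [Semiring A] [Algebra R A]
  {e : ι → A}

lemma sum_smul_mul (he : OrthogonalIdempotents e) (a : ι → R) (j : ι) :
    (∑ i, a i • e i) * e j = a j • e j := by
  simp [Finset.sum_mul, he.mul_eq]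

lemma mul_sum_smul (he : OrthogonalIdempotents e) (a : ι → R) (j : ι) :
    e j * (∑ i, a i • e i) = a j • e j := by
  simp [Finset.mul_sum, he.mul_eq]

lemma sum_smul_mul_corner_mul_sum_smul (he : OrthogonalIdempotents e) (a b : ι → R) (j k : ι)
    (x : A) :
    (∑ i, a i • e i) * e j * x * e k * (∑ i, b i • e i) = (a j * b k) • (e j * x * e k) := by
  rw [mul_assoc _ (e k), he.mul_sum_smul, he.sum_smul_mul, smul_mul_assoc, smul_mul_assoc,
    mul_smul_comm, smul_smul]

end OrthogonalIdempotents

lemma Finset.mul_sum_mul_mul_sum_mul {A ι κ : Type*} [NonUnitalNonAssocSemiring A] (s : Finset ι)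
    (t : Finset κ) (a b c : A) (u : ι → A) (v : κ → A) :
    a * (∑ i ∈ s, u i) * b * (∑ k ∈ t, v k) * c = ∑ k ∈ t, ∑ i ∈ s, a * u i * b * v k * c := by
  simp only [Finset.mul_sum, Finset.sum_mul]

open MeasureTheory Set

lemma integral_Ioi_exp_mul_complex_smul {E : Type*} [NormedAddCommGroup E] [NormedSpace ℂ E]
    [CompleteSpace E] {a : ℂ} (ha : a.re < 0) (v : E) :
    ∫ x : ℝ in Ioi 0, Complex.exp (a * x) • v = (-a)⁻¹ • v := by
  rw [integral_smul_const, integral_exp_mul_complex_Ioi ha]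
  simp [neg_div, ← inv_neg]

/-- For a spectral resolution `L₀ = ∑ λ i • Π i` with orthogonal projectors summing to `1`,
`P = ∑_{s∈S} Π s`, `Q = ∑_{f∈F} Π f`, and a spectral gap `Re(λ s - λ f) > 0`, the function
`τ ↦ exp(τ • L₀) * Q * L₁ * P * exp(-τ • L₀)` is integrable on `[0,∞)` with
`∫₀^∞ = ∑_{s,f} (λ s - λ f)⁻¹ • (Π f * L₁ * Π s)`. -/
theorem stmt_16 {n S F : Type*} [Fintype n] [DecidableEq n]
    [Fintype S] [DecidableEq S] [Fintype F] [DecidableEq F]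
    (Prj : S ⊕ F → Matrix n n ℂ) (lam : S ⊕ F → ℂ)
    (horth : ∀ i j, Prj i * Prj j = if i = j then Prj i else 0)
    (hcomp : ∑ i : S ⊕ F, Prj i = 1)
    (hgap : ∀ (s : S) (f : F), 0 < (lam (Sum.inl s) - lam (Sum.inr f)).re)
    (L1 : Matrix n n ℂ) :
    @MeasureTheory.IntegrableOn ℝ (Matrix n n ℂ) _ _ SeminormedAddGroup.toContinuousENorm
      (fun τ : ℝ =>
        NormedSpace.exp (τ • ∑ i : S ⊕ F, lam i • Prj i) * (∑ f : F, Prj (Sum.inr f)) * L1 *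
          (∑ s : S, Prj (Sum.inl s)) * NormedSpace.exp ((-τ) • ∑ i : S ⊕ F, lam i • Prj i))
      (Set.Ioi 0) MeasureTheory.volume ∧
    ∫ τ in Set.Ioi (0:ℝ),
        NormedSpace.exp (τ • ∑ i : S ⊕ F, lam i • Prj i) * (∑ f : F, Prj (Sum.inr f)) * L1 *
          (∑ s : S, Prj (Sum.inl s)) * NormedSpace.exp ((-τ) • ∑ i : S ⊕ F, lam i • Prj i)
      = ∑ s : S, ∑ f : F,
          (lam (Sum.inl s) - lam (Sum.inr f))⁻¹ •
            (Prj (Sum.inr f) * L1 * Prj (Sum.inl s)) := by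
  have he : CompleteOrthogonalIdempotents Prj :=
    ⟨OrthogonalIdempotents.iff_mul_eq.mpr horth, hcomp⟩
  have hexp (t : ℝ) : exp (t • ∑ i, lam i • Prj i) = ∑ i, Complex.exp (t * lam i) • Prj i := by
    rw [Complex.exp_eq_exp_ℂ, ← he.exp_sum_smul, Finset.smul_sum]
    simp_rw [mul_smul]
    -- not closed by `rw`: the left `exp` is taken for the product topology on matrices, the right
    -- one for the Frobenius topology, and the two agree only up to unfolding
    rfl
  have hintegrand (τ : ℝ) :
      exp (τ • ∑ i, lam i • Prj i) * (∑ f : F, Prj (Sum.inr f)) * L1 *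
          (∑ s : S, Prj (Sum.inl s)) * exp ((-τ) • ∑ i, lam i • Prj i)
        = ∑ s : S, ∑ f : F, Complex.exp ((lam (Sum.inr f) - lam (Sum.inl s)) * τ) •
            (Prj (Sum.inr f) * L1 * Prj (Sum.inl s)) := by
    rw [hexp, hexp, Finset.mul_sum_mul_mul_sum_mul]
    simp_rw [he.1.sum_smul_mul_corner_mul_sum_smul, ← Complex.exp_add]
    congr! 4
    push_cast
    ring
  have hdecay (s : S) (f : F) : (lam (Sum.inr f) - lam (Sum.inl s)).re < 0 := by
    simpa using hgap s f
  have hint (s : S) (f : F) := (integrableOn_exp_mul_complex_Ioi (hdecay s f) 0).smul_const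
    (Prj (Sum.inr f) * L1 * Prj (Sum.inl s))
  have hint_sum (s : S) := integrable_finsetSum Finset.univ fun f _ => hint s f
  simp_rw [hintegrand]
  refine ⟨integrable_finsetSum _ fun s _ => hint_sum s, ?_⟩
  rw [integral_finsetSum _ fun s _ => hint_sum s]
  refine Finset.sum_congr rfl fun s _ => ?_
  rw [integral_finsetSum _ fun f _ => hint s f]
  simp_rw [integral_Ioi_exp_mul_complex_smul (hdecay s _), neg_sub]
end

section
/- Let L and Pε be n×n complex matrices, S a finite type, χR an n×S complex matrix and χL' an S×n complex matrix. Assume Pε * (χR * χL') = Pε and (1 − Pε) * L * Pε = 0. Then the maps K := Pε * χR and F := χL' * L * Pε * χR satisfy the invariance condition L * K = K * F. -/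
theorem mul_eq_mul_mul_of_one_sub_mul_mul_eq_zero {R : Type*} [Ring R] {L P : R}
    (h : (1 - P) * L * P = 0) : L * P = P * L * P := by
  rwa [sub_mul, sub_mul, one_mul, sub_eq_zero] at h

/-- If `Pε * (χR * χL') = Pε` and `(1 - Pε) * L * Pε = 0`, then the maps
`K = Pε * χR` and `F = χL' * L * Pε * χR` satisfy the invariance condition
`L * K = K * F`. -/
theorem stmt_17 {n S : Type*} [Fintype n] [DecidableEq n] [Fintype S]
    (L Peps : Matrix n n ℂ) (chiR : Matrix n S ℂ) (chiL : Matrix S n ℂ)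
    (hP : Peps * (chiR * chiL) = Peps)
    (hinv : (1 - Peps) * L * Peps = 0) :
    L * (Peps * chiR) = (Peps * chiR) * (chiL * L * Peps * chiR) :=
  calc L * (Peps * chiR) = L * Peps * chiR := (Matrix.mul_assoc _ _ _).symm
    _ = Peps * L * Peps * chiR := by rw [mul_eq_mul_mul_of_one_sub_mul_mul_eq_zero hinv]
    _ = Peps * (chiR * chiL) * L * Peps * chiR := by rw [hP]
    _ = (Peps * chiR) * (chiL * L * Peps * chiR) := by simp only [Matrix.mul_assoc]
end

section
/- Let κ > 0 and ω_ph, ω_eg be real numbers, and set γ₊ := κ/2 + I*(ω_ph + ω_eg) and γ₋ := κ/2 + I*(ω_ph − ω_eg) as complex numbers (both nonzero since κ > 0). Let K be the 2×2 complex matrix with entries K j k = 1/γ_j + 1/(conj γ_k) for j, k ∈ {+, −}. Then: (a) K is Hermitian; (b) trace K = κ/‖γ₊‖² + κ/‖γ₋‖², which is strictly positive; (c) det K = −4*ω_eg²/(‖γ₊‖² * ‖γ₋‖²); in particular, if ω_eg ≠ 0 then det K < 0, so the Hermitian matrix K is not positive semidefinite (the second-order adiabatic-elimination generator violates complete positivity).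 -/
open scoped ComplexOrder

/-!
For `K j k = γ_j⁻¹ + (conj γ_k)⁻¹` the diagonal entries are `2 Re γ_j⁻¹ = 2 Re γ_j / ‖γ_j‖²`, and
expanding the 2×2 determinant gives `-‖γ₊ - γ₋‖² / (‖γ₊‖² ‖γ₋‖²)`. Here `γ₊ - γ₋ = 2 i ω_eg`, so the
determinant is negative as soon as `ω_eg ≠ 0`, which is impossible for a positive semidefinite matrix.
-/

open ComplexConjugate

theorem Complex.inv_add_inv_conj (z : ℂ) : z⁻¹ + (conj z)⁻¹ = ((2 * z.re / ‖z‖ ^ 2 : ℝ) : ℂ) := by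
  rw [← map_inv₀, Complex.add_conj, Complex.inv_re, Complex.normSq_eq_norm_sq, mul_div_assoc]

namespace Matrix

variable {ι : Type*}

noncomputable def dissipator (γ : ι → ℂ) : Matrix ι ι ℂ := of fun j k => (γ j)⁻¹ + (conj (γ k))⁻¹

theorem dissipator_apply (γ : ι → ℂ) (j k : ι) : dissipator γ j k = (γ j)⁻¹ + (conj (γ k))⁻¹ := rfl

theorem isHermitian_dissipator (γ : ι → ℂ) : (dissipator γ).IsHermitian := by
  ext j k
  simp [dissipator_apply, add_comm]

theorem trace_dissipator [Fintype ι] (γ : ι → ℂ) :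
    (dissipator γ).trace = ((∑ i, 2 * (γ i).re / ‖γ i‖ ^ 2 : ℝ) : ℂ) := by
  simp [trace, dissipator_apply, Complex.inv_add_inv_conj]

theorem dissipator_submatrix {κ : Type*} (γ : ι → ℂ) (e : κ → ι) :
    (dissipator γ).submatrix e e = dissipator (γ ∘ e) := rfl

theorem det_dissipator_fin_two {γ : Fin 2 → ℂ} (h₀ : γ 0 ≠ 0) (h₁ : γ 1 ≠ 0) :
    (dissipator γ).det = ((-(‖γ 0 - γ 1‖ ^ 2) / (‖γ 0‖ ^ 2 * ‖γ 1‖ ^ 2) : ℝ) : ℂ) := by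
  have hc₀ : conj (γ 0) ≠ 0 := by simpa using h₀
  have hc₁ : conj (γ 1) ≠ 0 := by simpa using h₁
  rw [det_fin_two]
  simp only [dissipator_apply]
  push_cast
  simp only [← Complex.mul_conj', map_sub]
  field_simp
  ring

theorem det_dissipator_bool {γ : Bool → ℂ} (ht : γ true ≠ 0) (hf : γ false ≠ 0) :
    (dissipator γ).det = ((-(‖γ true - γ false‖ ^ 2) / (‖γ true‖ ^ 2 * ‖γ false‖ ^ 2) : ℝ) : ℂ) := by
  rw [← det_submatrix_equiv_self finTwoEquiv, dissipator_submatrix, det_dissipator_fin_two hf ht]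
  simp [finTwoEquiv, norm_sub_rev, mul_comm]

theorem not_posSemidef_of_det_re_neg {n : Type*} [Fintype n] [DecidableEq n] {A : Matrix n n ℂ}
    (h : A.det.re < 0) : ¬ A.PosSemidef := fun hA =>
  (Complex.le_def.mp hA.det_nonneg).1.not_gt h

end Matrix

/-- Properties of the dissipator coefficient matrix `K j k = 1/γ_j + 1/conj(γ_k)`
(indexed by `Bool`, with `true = +` and `false = -`): it is Hermitian, has strictly
positive trace `κ/‖γ₊‖² + κ/‖γ₋‖²`, and determinant `-4 ω_eg²/(‖γ₊‖² ‖γ₋‖²)`; in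
particular if `ω_eg ≠ 0` the determinant is negative and `K` is not positive
semidefinite (the second-order adiabatic-elimination generator is not of GKSL form). -/
theorem stmt_18 (κ ωph ωeg : ℝ) (hκ : 0 < κ) :
    let γp : ℂ := κ / 2 + Complex.I * (ωph + ωeg)
    let γn : ℂ := κ / 2 + Complex.I * (ωph - ωeg)
    let K : Matrix Bool Bool ℂ := Matrix.of fun j k =>
      1 / (if j then γp else γn) + 1 / (starRingEnd ℂ) (if k then γp else γn)
    γp ≠ 0 ∧ γn ≠ 0 ∧
    K.IsHermitian ∧
    K.trace = ((κ / ‖γp‖ ^ 2 + κ / ‖γn‖ ^ 2 : ℝ) : ℂ) ∧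
    (0 : ℝ) < κ / ‖γp‖ ^ 2 + κ / ‖γn‖ ^ 2 ∧
    K.det = ((-(4 * ωeg ^ 2) / (‖γp‖ ^ 2 * ‖γn‖ ^ 2) : ℝ) : ℂ) ∧
    (ωeg ≠ 0 → K.det.re < 0 ∧ ¬ K.PosSemidef) := by
  intro γp γn K
  have hre_p : γp.re = κ / 2 := by simp [γp]
  have hre_n : γn.re = κ / 2 := by simp [γn]
  have hγp : γp ≠ 0 := fun h => by simp [h] at hre_p; linarith
  have hγn : γn ≠ 0 := fun h => by simp [h] at hre_n; linarith
  have hK : K = Matrix.dissipator fun b => if b then γp else γn := by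
    ext j k; cases j <;> cases k <;> simp [K, Matrix.dissipator_apply]
  have hdiff : ‖γp - γn‖ ^ 2 = 4 * ωeg ^ 2 := by
    rw [show γp - γn = ((2 * ωeg : ℝ) : ℂ) * Complex.I by simp only [γp, γn]; push_cast; ring]
    norm_num [mul_pow]
  have hdet : K.det = ((-(4 * ωeg ^ 2) / (‖γp‖ ^ 2 * ‖γn‖ ^ 2) : ℝ) : ℂ) := by
    rw [hK, Matrix.det_dissipator_bool hγp hγn]
    simp [hdiff]
  refine ⟨hγp, hγn, hK ▸ Matrix.isHermitian_dissipator _, ?_, by positivity, hdet, fun hω => ?_⟩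
  · rw [hK, Matrix.trace_dissipator, Fintype.sum_bool]
    simp only [if_true, Bool.false_eq_true, if_false, hre_p, hre_n]
    push_cast
    ring
  · have hneg : K.det.re < 0 := by
      rw [hdet, Complex.ofReal_re]
      exact div_neg_of_neg_of_pos (neg_neg_of_pos (by positivity)) (by positivity)
    exact ⟨hneg, Matrix.not_posSemidef_of_det_re_neg hneg⟩
end
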